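/- arXiv:2510.24244 — 7 statements merged into one kernel-verified Lean document; each statement's English description precedes it below -/
import Mathlib

section
/- Let ν be a probability measure on a measurable space M, and let q : M → ℝ and r : M → ℝ be measurable with r ≥ 0 and r integrable. Then |∫ r(x)e^{iq(x)} dν(x)|² = (∫ r dν)² − 2 ∫∫ r(x₁)r(x₂) sin²((q(x₁)−q(x₂))/2) dν(x₁) dν(x₂). -/
open MeasureTheory

/-- The exact identity for the modulus of an integral of `r·e^{iq}` against a probability
measure: `|∫ r e^{iq} dν|² = (∫ r dν)² − 2 ∫∫ r(x₁)r(x₂) sin²((q(x₁)−q(x₂))/2) dν dν`. -/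
theorem stmt_0 {M : Type*} [MeasurableSpace M] (ν : Measure M) [IsProbabilityMeasure ν]
    (q r : M → ℝ) (hq : Measurable q) (hr : Measurable r)
    (hr0 : ∀ x, 0 ≤ r x) (hri : Integrable r ν) :
    ‖∫ x, (r x : ℂ) * Complex.exp (Complex.I * (q x : ℂ)) ∂ν‖ ^ 2 =
      (∫ x, r x ∂ν) ^ 2 -
        2 * ∫ x₁, ∫ x₂, r x₁ * r x₂ * Real.sin ((q x₁ - q x₂) / 2) ^ 2 ∂ν ∂ν := by
  set C := ∫ x, r x * Real.cos (q x) ∂ν with hCdef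
  set S := ∫ x, r x * Real.sin (q x) ∂ν with hSdef
  set R := ∫ x, r x ∂ν with hRdef
  have hbd : ∀ (b : M → ℝ), Measurable b → (∀ x, |b x| ≤ 1) →
      Integrable (fun x => r x * b x) ν := by
    intro b hb hb1
    refine hri.mono ((hr.mul hb).aestronglyMeasurable)
      (Filter.Eventually.of_forall fun x => ?_)
    rw [Real.norm_eq_abs, Real.norm_eq_abs, abs_mul, abs_of_nonneg (hr0 x)]
    nlinarith [abs_nonneg (b x), hr0 x, hb1 x]
  have hC : Integrable (fun x => r x * Real.cos (q x)) ν :=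
    hbd _ hq.cos fun x => Real.abs_cos_le_one _
  have hS : Integrable (fun x => r x * Real.sin (q x)) ν :=
    hbd _ hq.sin fun x => Real.abs_sin_le_one _
  -- Step A: the complex integral equals C + S*I
  have key : ∫ x, (r x : ℂ) * Complex.exp (Complex.I * (q x : ℂ)) ∂ν
      = (C : ℂ) + (S : ℂ) * Complex.I := by
    have e : ∀ x, (r x : ℂ) * Complex.exp (Complex.I * (q x : ℂ))
        = ((r x * Real.cos (q x) : ℝ) : ℂ) + (r x * Real.sin (q x) : ℝ) • (Complex.I) := by
      intro x
      rw [mul_comm Complex.I, Complex.exp_mul_I, Complex.real_smul]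
      push_cast
      ring
    have h1 : Integrable (fun x => ((r x * Real.cos (q x) : ℝ) : ℂ)) ν := hC.ofReal
    have h2 : Integrable (fun x => (r x * Real.sin (q x)) • Complex.I) ν :=
      hS.smul_const Complex.I
    have h3 : (∫ a, ((r a * Real.cos (q a) : ℝ) : ℂ) ∂ν) = ((C : ℝ) : ℂ) :=
      integral_ofReal
    rw [integral_congr_ae (Filter.Eventually.of_forall e),
      integral_add h1 h2, integral_smul_const, h3, Complex.real_smul]
  have lhs_eq : ‖∫ x, (r x : ℂ) * Complex.exp (Complex.I * (q x : ℂ)) ∂ν‖ ^ 2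
      = C ^ 2 + S ^ 2 := by
    rw [key, Complex.sq_norm, Complex.normSq_apply]
    simp
    ring
  -- Step B: compute the double integral
  have inner : ∀ x₁, (∫ x₂, r x₁ * r x₂ * Real.sin ((q x₁ - q x₂) / 2) ^ 2 ∂ν)
      = (r x₁ / 2) * (R - (Real.cos (q x₁) * C + Real.sin (q x₁) * S)) := by
    intro x₁
    have e : ∀ x₂, r x₁ * r x₂ * Real.sin ((q x₁ - q x₂) / 2) ^ 2
        = (r x₁ / 2) * (r x₂ - (Real.cos (q x₁) * (r x₂ * Real.cos (q x₂))
            + Real.sin (q x₁) * (r x₂ * Real.sin (q x₂)))) := by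
      intro x₂
      have h := Real.sin_sq_eq_half_sub ((q x₁ - q x₂) / 2)
      rw [mul_div_cancel₀ _ (two_ne_zero)] at h
      rw [h, Real.cos_sub]
      ring
    simp only [e]
    have hsum : Integrable (fun x => Real.cos (q x₁) * (r x * Real.cos (q x))
        + Real.sin (q x₁) * (r x * Real.sin (q x))) ν :=
      (hC.const_mul _).add (hS.const_mul _)
    rw [integral_const_mul, integral_sub hri hsum,
      integral_add (hC.const_mul _) (hS.const_mul _), integral_const_mul,
      integral_const_mul, ← hCdef, ← hSdef, ← hRdef]
  have douter : (∫ x₁, ∫ x₂, r x₁ * r x₂ * Real.sin ((q x₁ - q x₂) / 2) ^ 2 ∂ν ∂ν)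
      = (R * R - (C * C + S * S)) / 2 := by
    simp only [inner]
    have e : ∀ x₁, (r x₁ / 2) * (R - (Real.cos (q x₁) * C + Real.sin (q x₁) * S))
        = (1 / 2) * (r x₁ * R - ((r x₁ * Real.cos (q x₁)) * C
            + (r x₁ * Real.sin (q x₁)) * S)) := by
      intro x₁; ring
    simp only [e]
    have hsum : Integrable (fun x => (r x * Real.cos (q x)) * C
        + (r x * Real.sin (q x)) * S) ν := (hC.mul_const C).add (hS.mul_const S)
    rw [integral_const_mul, integral_sub (hri.mul_const R) hsum,
      integral_add (hC.mul_const C) (hS.mul_const S), integral_mul_const,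
      integral_mul_const, integral_mul_const, ← hCdef, ← hSdef, ← hRdef]
    ring
  rw [lhs_eq, douter]
  ring
end

section
/- Let (X_j)_{j≥0} be a Markov chain with backward Dobrushin coefficients π_j = sup_{x,y} ‖P_j(·|x) − P_j(·|y)‖_{TV}, where P_j(·|x) is the law of X_j given X_{j+1}=x. Then the reverse φ-mixing coefficients satisfy φ_R(n) ≤ (sup_j π_j)^n for every n ∈ ℕ. In particular, if sup_j π_j ≤ δ < 1 then φ_R(n) ≤ δ^n. -/
open MeasureTheory ProbabilityTheory Filter
open scoped Topology Classical ENNReal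

/-- Total variation norm of the difference of two measures, as the supremum of
`|∫ G dμ − ∫ G dν|` over measurable `G` with `|G| ≤ 1`. -/
noncomputable def tvDist {X : Type*} [MeasurableSpace X] (μ ν : Measure X) : ℝ :=
  ⨆ G : {G : X → ℝ // Measurable G ∧ ∀ x, |G x| ≤ 1},
    |(∫ x, G.1 x ∂μ) - ∫ x, G.1 x ∂ν|

/-- Doob–Dynkin factorization for real-valued functions. -/
lemma doobDynkin_aux {α β : Type*} [mβ : MeasurableSpace β] {g : α → β} {f : α → ℝ}
    (hf : Measurable[mβ.comap g] f) : ∃ h : β → ℝ, Measurable h ∧ ∀ ω, f ω = h (g ω) := by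
  classical
  have hB : ∀ q : ℚ, ∃ B : Set β, MeasurableSet B ∧ g ⁻¹' B = f ⁻¹' (Set.Iio (q:ℝ)) := by
    intro q
    have := hf (measurableSet_Iio (a := (q:ℝ)))
    exact this
  choose B hBmeas hBeq using hB
  set h' : β → EReal := fun x => ⨅ q : ℚ, (B q).piecewise (fun _ => ((q:ℝ):EReal)) (fun _ => ⊤) x with hh'
  have h'meas : Measurable h' :=
    Measurable.iInf fun q => Measurable.piecewise (hBmeas q) measurable_const measurable_const
  refine ⟨fun x => (h' x).toReal, h'meas.ereal_toReal, fun ω => ?_⟩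
  have hmem : ∀ q : ℚ, (g ω ∈ B q ↔ f ω < (q:ℝ)) := by
    intro q
    constructor
    · intro h; have : ω ∈ g ⁻¹' B q := h; rw [hBeq q] at this; exact this
    · intro h; have : ω ∈ f ⁻¹' Set.Iio (q:ℝ) := h; rw [← hBeq q] at this; exact this
  have key : h' (g ω) = ((f ω : ℝ) : EReal) := by
    apply le_antisymm
    · rw [← EReal.le_of_forall_lt_iff_le]
      intro z hz
      have hz' : f ω < z := by exact_mod_cast hz
      obtain ⟨q, hq1, hq2⟩ := exists_rat_btwn hz'
      refine iInf_le_of_le q ?_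
      rw [Set.piecewise_eq_of_mem _ _ _ ((hmem q).2 hq1)]
      exact_mod_cast hq2.le
    · refine le_iInf fun q => ?_
      by_cases hq : g ω ∈ B q
      · rw [Set.piecewise_eq_of_mem _ _ _ hq]
        exact_mod_cast ((hmem q).1 hq).le
      · rw [Set.piecewise_eq_of_notMem _ _ _ hq]; exact le_top
  show f ω = (h' (g ω)).toReal
  rw [key, EReal.toReal_coe]

lemma aux_sum_indicator {α : Type*} (f : ℕ → Set α) (hdisj : Pairwise (Function.onFun Disjoint f))
    (N : ℕ) (ω : α) :
    (∑ i ∈ Finset.range N, (f i).indicator (fun _ => (1:ℝ)) ω) =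
      if ∃ i < N, ω ∈ f i then 1 else 0 := by
  classical
  by_cases h : ∃ i < N, ω ∈ f i
  · obtain ⟨i₀, hi₀N, hi₀⟩ := h
    rw [if_pos ⟨i₀, hi₀N, hi₀⟩]
    rw [Finset.sum_eq_single i₀]
    · simp [Set.indicator_of_mem hi₀]
    · intro j _ hj
      have : ω ∉ f j := fun hωj =>
        (hdisj hj.symm).le_bot (by exact ⟨hi₀, hωj⟩ : ω ∈ f i₀ ⊓ f j)
      simp [Set.indicator_of_notMem this]
    · intro h'; exact absurd (Finset.mem_range.mpr hi₀N) h'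
  · rw [if_neg h]
    refine Finset.sum_eq_zero fun j hj => ?_
    have : ω ∉ f j := fun hωj => h ⟨j, Finset.mem_range.mp hj, hωj⟩
    simp [Set.indicator_of_notMem this]

lemma condexp_indicator_iUnion_eq {α : Type*} {m₁ m₂ : MeasurableSpace α}
    [m0 : MeasurableSpace α] (μ : Measure α)
    [IsProbabilityMeasure μ] (hm₁ : m₁ ≤ m0) (hm₂ : m₂ ≤ m0)
    (f : ℕ → Set α) (hdisj : Pairwise (Function.onFun Disjoint f)) (hmeas : ∀ i, MeasurableSet[m0] (f i))
    (h : ∀ i, μ[(f i).indicator (fun _ => (1:ℝ))|m₁] =ᵐ[μ] μ[(f i).indicator (fun _ => (1:ℝ))|m₂]) :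
    μ[(⋃ i, f i).indicator (fun _ => (1:ℝ))|m₁] =ᵐ[μ] μ[(⋃ i, f i).indicator (fun _ => (1:ℝ))|m₂] := by
  classical
  set FN : ℕ → α → ℝ := fun N => ∑ i ∈ Finset.range N, (f i).indicator (fun _ => (1:ℝ)) with hFN
  have hint : ∀ N, Integrable (FN N) μ :=
    fun N => integrable_finset_sum' _ fun i _ =>
      (integrable_const (1:ℝ)).indicator (hmeas i)
  have hFNeq : ∀ N ω, FN N ω = if ∃ i < N, ω ∈ f i then 1 else 0 := by
    intro N ω
    show (∑ i ∈ Finset.range N, (f i).indicator (fun _ => (1:ℝ))) ω = _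
    rw [Finset.sum_apply]
    exact aux_sum_indicator f hdisj N ω
  have hbound : ∀ N, ∀ᵐ ω ∂μ, ‖FN N ω‖ ≤ (1:ℝ) := by
    intro N
    refine Eventually.of_forall fun ω => ?_
    rw [hFNeq N ω]
    split <;> simp
  have htend : ∀ᵐ ω ∂μ, Tendsto (fun N => FN N ω) atTop (𝓝 ((⋃ i, f i).indicator (fun _ => (1:ℝ)) ω)) := by
    refine Eventually.of_forall fun ω => ?_
    by_cases hω : ω ∈ ⋃ i, f i
    · obtain ⟨i₀, hi₀⟩ := Set.mem_iUnion.mp hω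
      rw [Set.indicator_of_mem hω]
      refine tendsto_atTop_of_eventually_const (i₀ := i₀ + 1) fun N hN => ?_
      rw [hFNeq]; exact if_pos ⟨i₀, lt_of_lt_of_le (Nat.lt_succ_self _) hN, hi₀⟩
    · rw [Set.indicator_of_notMem hω]
      refine tendsto_atTop_of_eventually_const (i₀ := 0) fun N _ => ?_
      rw [hFNeq]
      exact if_neg (fun ⟨i, _, hi⟩ => hω (Set.mem_iUnion.mpr ⟨i, hi⟩))
  have hcond : ∀ N, μ[FN N|m₁] =ᵐ[μ] μ[FN N|m₂] := by
    intro N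
    show μ[∑ i ∈ Finset.range N, (f i).indicator (fun _ => (1:ℝ))|m₁] =ᵐ[μ]
      μ[∑ i ∈ Finset.range N, (f i).indicator (fun _ => (1:ℝ))|m₂]
    refine (condExp_finset_sum (fun i _ => (integrable_const (1:ℝ)).indicator (hmeas i)) m₁).trans
      (EventuallyEq.trans ?_ (condExp_finset_sum (fun i _ => (integrable_const (1:ℝ)).indicator (hmeas i)) m₂).symm)
    exact eventuallyEq_sum fun i _ => h i
  have hL1 : ∀ (m : MeasurableSpace α) (hm : m ≤ m0),
      Tendsto (fun N => condExpL1 hm μ (FN N)) atTop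
        (𝓝 (condExpL1 hm μ ((⋃ i, f i).indicator (fun _ => (1:ℝ))))) := by
    intro m hm
    exact tendsto_condExpL1_of_dominated_convergence hm (fun _ => (1:ℝ))
      (fun N => (hint N).aestronglyMeasurable) (integrable_const 1) hbound htend
  have heqN : ∀ N, condExpL1 hm₁ μ (FN N) = condExpL1 hm₂ μ (FN N) := by
    intro N
    ext1
    refine (condExp_ae_eq_condExpL1 hm₁ (FN N)).symm.trans ((hcond N).trans ?_)
    exact condExp_ae_eq_condExpL1 hm₂ (FN N)
  have hlim : condExpL1 hm₁ μ ((⋃ i, f i).indicator (fun _ => (1:ℝ)))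
      = condExpL1 hm₂ μ ((⋃ i, f i).indicator (fun _ => (1:ℝ))) :=
    tendsto_nhds_unique_of_eventuallyEq (hL1 m₁ hm₁) (hL1 m₂ hm₂) (Eventually.of_forall heqN)
  refine (condExp_ae_eq_condExpL1 hm₁ _).trans (EventuallyEq.trans ?_ (condExp_ae_eq_condExpL1 hm₂ _).symm)
  rw [hlim]

lemma sup_eq_generateFrom_inter {α : Type*} (m₁ m₂ : MeasurableSpace α) :
    m₁ ⊔ m₂ = MeasurableSpace.generateFrom
      {t | ∃ t₁ t₂, MeasurableSet[m₁] t₁ ∧ MeasurableSet[m₂] t₂ ∧ t = t₁ ∩ t₂} := by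
  apply le_antisymm
  · refine sup_le ?_ ?_
    · intro t ht
      exact MeasurableSpace.measurableSet_generateFrom ⟨t, Set.univ, ht, MeasurableSet.univ, by simp⟩
    · intro t ht
      exact MeasurableSpace.measurableSet_generateFrom ⟨Set.univ, t, MeasurableSet.univ, ht, by simp⟩
  · refine MeasurableSpace.generateFrom_le ?_
    rintro t ⟨t₁, t₂, ht₁, ht₂, rfl⟩
    exact MeasurableSet.inter ((le_sup_left : m₁ ≤ m₁ ⊔ m₂) _ ht₁)
      ((le_sup_right : m₂ ≤ m₁ ⊔ m₂) _ ht₂)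

lemma isPiSystem_inter_sets {α : Type*} (m₁ m₂ : MeasurableSpace α) :
    IsPiSystem {t | ∃ t₁ t₂, MeasurableSet[m₁] t₁ ∧ MeasurableSet[m₂] t₂ ∧ t = t₁ ∩ t₂} := by
  rintro s ⟨s₁, s₂, hs₁, hs₂, rfl⟩ t ⟨t₁, t₂, ht₁, ht₂, rfl⟩ -
  exact ⟨s₁ ∩ t₁, s₂ ∩ t₂, hs₁.inter ht₁, hs₂.inter ht₂, by ext ω; simp; tauto⟩

lemma indicator_inter_eq_mul {α : Type*} (t₁ t₂ : Set α) :
    (t₁ ∩ t₂).indicator (fun _ => (1:ℝ)) =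
      t₂.indicator (fun _ => (1:ℝ)) * t₁.indicator (fun _ => (1:ℝ)) := by
  funext ω
  by_cases h1 : ω ∈ t₁ <;> by_cases h2 : ω ∈ t₂ <;>
    simp [Set.indicator, h1, h2, Set.mem_inter_iff]

lemma indicator_compl_eq_sub {α : Type*} (t : Set α) :
    tᶜ.indicator (fun _ => (1:ℝ)) =
      (fun _ => (1:ℝ)) - t.indicator (fun _ => (1:ℝ)) := by
  funext ω
  by_cases h : ω ∈ t <;> simp [Set.indicator, h]

lemma condexp_indicator_sup_eq {α : Type*} {mp mx mf : MeasurableSpace α}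
    [m0 : MeasurableSpace α] (μ : Measure α) [IsProbabilityMeasure μ]
    (hmp : mp ≤ m0) (hmx : mx ≤ m0) (hmf : mf ≤ m0) (hxf : mx ≤ mf)
    (h : ∀ A : Set α, MeasurableSet[mp] A →
      μ[A.indicator (fun _ => (1:ℝ))|mf] =ᵐ[μ] μ[A.indicator (fun _ => (1:ℝ))|mx]) :
    ∀ A : Set α, MeasurableSet[mp ⊔ mx] A →
      μ[A.indicator (fun _ => (1:ℝ))|mf] =ᵐ[μ] μ[A.indicator (fun _ => (1:ℝ))|mx] := by
  have hsup : mp ⊔ mx ≤ m0 := sup_le hmp hmx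
  refine MeasurableSpace.induction_on_inter (m := mp ⊔ mx)
    (sup_eq_generateFrom_inter mp mx) (isPiSystem_inter_sets mp mx) ?_ ?_ ?_ ?_
  · have he : (∅ : Set α).indicator (fun _ => (1:ℝ)) = (0 : α → ℝ) := Set.indicator_empty _
    rw [he, condExp_zero, condExp_zero]
  · rintro t ⟨t₁, t₂, ht₁, ht₂, rfl⟩
    have hsm_f : StronglyMeasurable[mf] (t₂.indicator (fun _ => (1:ℝ))) :=
      stronglyMeasurable_const.indicator (hxf _ ht₂)
    have hsm_x : StronglyMeasurable[mx] (t₂.indicator (fun _ => (1:ℝ))) :=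
      stronglyMeasurable_const.indicator ht₂
    have hint1 : Integrable (t₁.indicator (fun _ => (1:ℝ))) μ :=
      (integrable_const (1:ℝ)).indicator (hmp _ ht₁)
    have hintm : Integrable (t₂.indicator (fun _ => (1:ℝ)) * t₁.indicator (fun _ => (1:ℝ))) μ := by
      rw [← indicator_inter_eq_mul]
      exact (integrable_const (1:ℝ)).indicator ((hmp _ ht₁).inter (hmx _ ht₂))
    calc μ[(t₁ ∩ t₂).indicator (fun _ => (1:ℝ))|mf]
        = μ[t₂.indicator (fun _ => (1:ℝ)) * t₁.indicator (fun _ => (1:ℝ))|mf] := by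
          rw [indicator_inter_eq_mul]
      _ =ᵐ[μ] t₂.indicator (fun _ => (1:ℝ)) * μ[t₁.indicator (fun _ => (1:ℝ))|mf] :=
          condExp_mul_of_stronglyMeasurable_left hsm_f hintm hint1
      _ =ᵐ[μ] t₂.indicator (fun _ => (1:ℝ)) * μ[t₁.indicator (fun _ => (1:ℝ))|mx] :=
          EventuallyEq.mul EventuallyEq.rfl (h t₁ ht₁)
      _ =ᵐ[μ] μ[t₂.indicator (fun _ => (1:ℝ)) * t₁.indicator (fun _ => (1:ℝ))|mx] :=
          (condExp_mul_of_stronglyMeasurable_left hsm_x hintm hint1).symm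
      _ = μ[(t₁ ∩ t₂).indicator (fun _ => (1:ℝ))|mx] := by rw [indicator_inter_eq_mul]
  · intro t ht iht
    have hint : Integrable (t.indicator (fun _ => (1:ℝ))) μ :=
      (integrable_const (1:ℝ)).indicator (hsup _ ht)
    calc μ[tᶜ.indicator (fun _ => (1:ℝ))|mf]
        = μ[(fun _ => (1:ℝ)) - t.indicator (fun _ => (1:ℝ))|mf] := by
          rw [indicator_compl_eq_sub]
      _ =ᵐ[μ] μ[(fun _ => (1:ℝ))|mf] - μ[t.indicator (fun _ => (1:ℝ))|mf] :=
          condExp_sub (integrable_const 1) hint mf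
      _ =ᵐ[μ] μ[(fun _ => (1:ℝ))|mx] - μ[t.indicator (fun _ => (1:ℝ))|mx] := by
          rw [condExp_const hmf, condExp_const hmx]
          exact EventuallyEq.sub EventuallyEq.rfl (iht)
      _ =ᵐ[μ] μ[tᶜ.indicator (fun _ => (1:ℝ))|mx] := by
          rw [indicator_compl_eq_sub]
          exact (condExp_sub (integrable_const 1) hint mx).symm
  · intro f hdisj hf ihf
    exact condexp_indicator_iUnion_eq μ hmf hmx f hdisj (fun i => hsup _ (hf i)) ihf

noncomputable def iterKer {S : ℕ → Type*} [∀ j, MeasurableSpace (S j)]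
    (κ : ∀ j, Kernel (S (j+1)) (S j)) (k : ℕ) (χ₀ : S k → ℝ) : (m : ℕ) → S (k+m) → ℝ
  | 0 => χ₀
  | (m+1) => fun x => ∫ y, iterKer κ k χ₀ m y ∂((κ (k+m)) x)

lemma iterKer_measurable {S : ℕ → Type*} [∀ j, MeasurableSpace (S j)]
    (κ : ∀ j, Kernel (S (j+1)) (S j)) (k : ℕ) (χ₀ : S k → ℝ)
    (hκ : ∀ j, IsMarkovKernel (κ j)) (hmeas : Measurable χ₀) :
    ∀ m, Measurable (iterKer κ k χ₀ m) := by
  intro m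
  induction m with
  | zero => exact hmeas
  | succ m ih =>
    haveI := hκ (k+m)
    have : StronglyMeasurable fun x : S (k+m+1) => ∫ y, iterKer κ k χ₀ m y ∂((κ (k+m)) x) :=
      MeasureTheory.StronglyMeasurable.integral_kernel_prod_right
        (κ := κ (k+m)) (f := fun _ y => iterKer κ k χ₀ m y)
        ((ih.comp measurable_snd).stronglyMeasurable)
    exact this.measurable

lemma iterKer_mem {S : ℕ → Type*} [∀ j, MeasurableSpace (S j)]
    (κ : ∀ j, Kernel (S (j+1)) (S j)) (k : ℕ) (χ₀ : S k → ℝ)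
    (hκ : ∀ j, IsMarkovKernel (κ j)) (hmeas : Measurable χ₀)
    (hmem : ∀ x, χ₀ x ∈ Set.Icc (0:ℝ) 1) :
    ∀ m x, iterKer κ k χ₀ m x ∈ Set.Icc (0:ℝ) 1 := by
  intro m
  induction m with
  | zero => exact hmem
  | succ m ih =>
    intro x
    haveI := hκ (k+m)
    have hintg : Integrable (iterKer κ k χ₀ m) ((κ (k+m)) x) := by
      refine (integrable_const (1:ℝ)).mono'
        ((iterKer_measurable κ k χ₀ hκ hmeas m).aestronglyMeasurable)
        (Eventually.of_forall fun y => ?_)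
      rw [Real.norm_eq_abs]
      exact abs_le.mpr ⟨by linarith [(ih y).1], (ih y).2⟩
    constructor
    · exact integral_nonneg fun y => (ih y).1
    · calc ∫ y, iterKer κ k χ₀ m y ∂((κ (k+m)) x)
          ≤ ∫ _, (1:ℝ) ∂((κ (k+m)) x) := integral_mono hintg (integrable_const 1) fun y => (ih y).2
        _ = 1 := by simp

lemma iterKer_osc {S : ℕ → Type*} [∀ j, MeasurableSpace (S j)]
    (κ : ∀ j, Kernel (S (j+1)) (S j)) (k : ℕ) (χ₀ : S k → ℝ)
    (hκ : ∀ j, IsMarkovKernel (κ j)) (hmeas : Measurable χ₀)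
    (hmem : ∀ x, χ₀ x ∈ Set.Icc (0:ℝ) 1)
    (π : ℝ) (hπ0 : 0 ≤ π) (hne : ∀ j, Nonempty (S j))
    (htv : ∀ (j : ℕ) (x y : S (j+1)) (G : S j → ℝ), Measurable G → (∀ z, |G z| ≤ 1) →
      |(∫ z, G z ∂((κ j) x)) - ∫ z, G z ∂((κ j) y)| ≤ π) :
    ∀ m, ∃ c : ℝ, ∀ x, |iterKer κ k χ₀ m x - c| ≤ π ^ m / 2 := by
  intro m
  induction m with
  | zero =>
    refine ⟨1/2, fun x => ?_⟩
    have hx := hmem x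
    simp only [Set.mem_Icc] at hx
    have : iterKer κ k χ₀ 0 x = χ₀ x := rfl
    rw [this, pow_zero, abs_le]
    constructor <;> [linarith [hx.1]; linarith [hx.2]]
  | succ m ih =>
    haveI := fun j => hκ j
    obtain ⟨c, hc⟩ := ih
    set r : ℝ := π ^ m / 2 with hr
    by_cases hr0 : r = 0
    · have hconst : ∀ y, iterKer κ k χ₀ m y = c := by
        intro y
        have h1 := (hc y).trans_eq hr0
        have h2 := abs_nonneg (iterKer κ k χ₀ m y - c)
        have h3 : |iterKer κ k χ₀ m y - c| = 0 := le_antisymm h1 h2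
        have := abs_eq_zero.mp h3
        linarith
      refine ⟨c, fun x => ?_⟩
      have hcx : iterKer κ k χ₀ (m+1) x = c := by
        show (∫ y, iterKer κ k χ₀ m y ∂((κ (k+m)) x)) = c
        rw [integral_congr_ae (Eventually.of_forall hconst)]
        simp
      rw [hcx, sub_self, abs_zero]
      positivity
    · have hrpos : 0 < r := lt_of_le_of_ne (by positivity) (Ne.symm hr0)
      obtain ⟨x₀⟩ := hne (k+(m+1))
      refine ⟨iterKer κ k χ₀ (m+1) x₀, fun x => ?_⟩
      set G : S (k+m) → ℝ := fun y => (iterKer κ k χ₀ m y - c) / r with hG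
      have hGmeas : Measurable G :=
        ((iterKer_measurable κ k χ₀ hκ hmeas m).sub measurable_const).div_const r
      have hGbd : ∀ z, |G z| ≤ 1 := by
        intro z
        rw [hG]
        simp only [abs_div, abs_of_pos hrpos]
        exact div_le_one_of_le₀ (hc z) hrpos.le
      have hkey : ∀ z : S (k+(m+1)), iterKer κ k χ₀ (m+1) z
          = r * (∫ y, G y ∂((κ (k+m)) z)) + c := by
        intro z
        show (∫ y, iterKer κ k χ₀ m y ∂((κ (k+m)) z)) = _
        have hGint : Integrable G ((κ (k+m)) z) := by
          refine (integrable_const (1:ℝ)).mono' hGmeas.aestronglyMeasurable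
            (Eventually.of_forall fun y => ?_)
          rw [Real.norm_eq_abs]; exact hGbd y
        have hrw : ∀ y, iterKer κ k χ₀ m y = r * G y + c := by
          intro y; rw [hG]; field_simp; ring
        rw [integral_congr_ae (Eventually.of_forall hrw)]
        rw [integral_add (hGint.const_mul r) (integrable_const c)]
        rw [integral_const_mul, integral_const]
        simp
      rw [hkey x, hkey x₀]
      have hring : r * (∫ y, G y ∂((κ (k+m)) x)) + c - (r * (∫ y, G y ∂((κ (k+m)) x₀)) + c)
          = r * ((∫ y, G y ∂((κ (k+m)) x)) - ∫ y, G y ∂((κ (k+m)) x₀)) := by ring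
      rw [hring, abs_mul, abs_of_pos hrpos]
      calc r * |(∫ y, G y ∂((κ (k+m)) x)) - ∫ y, G y ∂((κ (k+m)) x₀)|
          ≤ r * π := mul_le_mul_of_nonneg_left (htv (k+m) x x₀ G hGmeas hGbd) hrpos.le
        _ = π ^ (m+1) / 2 := by rw [hr]; ring

/-- For a Markov chain with backward transition kernels `κ j` (the conditional law of `X_j`
given `X_{j+1}`) whose backward Dobrushin coefficients are bounded by `π`, the reverse
φ-mixing coefficients satisfy `φ_R(n) ≤ π^n`: for every `k`, every `A ∈ σ(X_0,…,X_k)` and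
`B ∈ σ(X_s : s ≥ k+n)` with `μ(B) > 0`, `|μ(A|B) − μ(A)| ≤ π^n`. -/
theorem stmt_6 {Ω : Type*} [m0 : MeasurableSpace Ω] (μ : Measure Ω) [IsProbabilityMeasure μ]
    (S : ℕ → Type*) [∀ j, MeasurableSpace (S j)]
    (X : ∀ j, Ω → S j) (hX : ∀ j, Measurable (X j))
    (κ : ∀ j, Kernel (S (j + 1)) (S j)) (hκ : ∀ j, IsMarkovKernel (κ j))
    -- Markov property: the past is conditionally independent of the future given the present
    (hMarkov : ∀ j : ℕ, ∀ A : Set Ω,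
      MeasurableSet[⨆ s ∈ Set.Iic j, MeasurableSpace.comap (X s) inferInstance] A →
      μ[A.indicator (fun _ => (1 : ℝ)) |
          ⨆ s ∈ Set.Ici (j + 1), MeasurableSpace.comap (X s) inferInstance]
        =ᵐ[μ] μ[A.indicator (fun _ => (1 : ℝ)) | MeasurableSpace.comap (X (j + 1)) inferInstance])
    -- κ j is the backward transition kernel of the chain
    (hker : ∀ j : ℕ, ∀ g : S j → ℝ, Measurable g → (∀ x, |g x| ≤ 1) →
      μ[(fun ω => g (X j ω)) | MeasurableSpace.comap (X (j + 1)) inferInstance]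
        =ᵐ[μ] fun ω => ∫ y, g y ∂(κ j (X (j + 1) ω)))
    (π : ℝ) (hπ : ∀ (j : ℕ) (x y : S (j + 1)), tvDist (κ j x) (κ j y) ≤ π) :
    ∀ (n k : ℕ) (A B : Set Ω),
      MeasurableSet[⨆ s ∈ Set.Iic k, MeasurableSpace.comap (X s) inferInstance] A →
      MeasurableSet[⨆ s ∈ Set.Ici (k + n), MeasurableSpace.comap (X s) inferInstance] B →
      0 < μ B →
      |(μ (A ∩ B)).toReal / (μ B).toReal - (μ A).toReal| ≤ π ^ n := by
  classical
  -- abbreviations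
  set F : ℕ → MeasurableSpace Ω :=
    fun k => ⨆ s ∈ Set.Iic k, MeasurableSpace.comap (X s) inferInstance with hF
  set G : ℕ → MeasurableSpace Ω :=
    fun i => ⨆ s ∈ Set.Ici i, MeasurableSpace.comap (X s) inferInstance with hGdef
  set C : ℕ → MeasurableSpace Ω :=
    fun j => MeasurableSpace.comap (X j) inferInstance with hCdef
  have hC_le : ∀ j, C j ≤ m0 := fun j => (hX j).comap_le
  have hF_le : ∀ a, F a ≤ m0 := fun a => iSup₂_le fun s _ => (hX s).comap_le
  have hG_le : ∀ i, G i ≤ m0 := fun i => iSup₂_le fun s _ => (hX s).comap_le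
  have hCG : ∀ i j, i ≤ j → C j ≤ G i := fun i j hij =>
    le_iSup₂ (f := fun s (_ : s ∈ Set.Ici i) => MeasurableSpace.comap (X s) inferInstance)
      j (Set.mem_Ici.mpr hij)
  have hFF : ∀ a b, a ≤ b → F a ≤ F b := fun a b hab =>
    biSup_mono fun s hs => le_trans hs hab
  intro n k A B hA hB hμB
  have hAmeas : MeasurableSet A := hF_le k A hA
  have hBmeas : MeasurableSet B := hG_le (k+n) B hB
  have hμBfin : μ B ≠ ⊤ := measure_ne_top μ B
  have hbpos : 0 < (μ B).toReal := ENNReal.toReal_pos hμB.ne' hμBfin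
  -- trivial case n = 0
  cases n with
  | zero =>
    rw [pow_zero]
    have h1 : (μ (A ∩ B)).toReal / (μ B).toReal ≤ 1 := by
      rw [div_le_one hbpos]
      exact ENNReal.toReal_mono hμBfin (measure_mono Set.inter_subset_right)
    have h2 : 0 ≤ (μ (A ∩ B)).toReal / (μ B).toReal :=
      div_nonneg ENNReal.toReal_nonneg hbpos.le
    have h3 : (μ A).toReal ≤ 1 := by
      have h := prob_le_one (μ := μ) (s := A)
      have := ENNReal.toReal_mono ENNReal.one_ne_top h
      simpa using this
    have h4 : 0 ≤ (μ A).toReal := ENNReal.toReal_nonneg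
    rw [abs_le]; constructor <;> linarith
  | succ n' =>
    set n : ℕ := n' + 1 with hn
    -- nonemptiness
    have hΩ : Nonempty Ω := by
      rcases isEmpty_or_nonempty Ω with hE | hNE
      · exfalso
        have h1 : μ Set.univ = 1 := measure_univ
        rw [Set.univ_eq_empty_iff.mpr hE, measure_empty] at h1
        simp at h1
      · exact hNE
    have hSne : ∀ j, Nonempty (S j) := fun j => ⟨X j hΩ.some⟩
    -- π is nonnegative
    have hπ0 : 0 ≤ π := by
      refine le_trans ?_ (hπ 0 (hSne 1).some (hSne 1).some)
      exact Real.iSup_nonneg fun _ => abs_nonneg _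
    -- usable total variation bound
    have htv : ∀ (j : ℕ) (x y : S (j+1)) (Gf : S j → ℝ), Measurable Gf → (∀ z, |Gf z| ≤ 1) →
        |(∫ z, Gf z ∂((κ j) x)) - ∫ z, Gf z ∂((κ j) y)| ≤ π := by
      intro j x y Gf hGmeas hGbd
      haveI := hκ j
      have hbdd : BddAbove (Set.range fun (G' : {G' : S j → ℝ // Measurable G' ∧ ∀ z, |G' z| ≤ 1}) =>
          |(∫ z, G'.1 z ∂((κ j) x)) - ∫ z, G'.1 z ∂((κ j) y)|) := by
        refine ⟨2, ?_⟩
        rintro v ⟨G', rfl⟩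
        have hb : ∀ (ν : Measure (S j)), IsProbabilityMeasure ν → |∫ z, G'.1 z ∂ν| ≤ 1 := by
          intro ν hν
          rw [← Real.norm_eq_abs]
          calc ‖∫ z, G'.1 z ∂ν‖ ≤ 1 * (ν Set.univ).toReal :=
              norm_integral_le_of_norm_le_const
                (Eventually.of_forall fun z => by rw [Real.norm_eq_abs]; exact G'.2.2 z)
            _ = 1 := by simp [hν.measure_univ]
        have h1 := abs_le.mp (hb ((κ j) x) inferInstance)
        have h2 := abs_le.mp (hb ((κ j) y) inferInstance)
        rw [abs_le]; constructor <;> linarith [h1.1, h1.2, h2.1, h2.2]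
      refine le_trans ?_ (hπ j x y)
      exact le_ciSup hbdd (⟨Gf, hGmeas, hGbd⟩ :
        {G' : S j → ℝ // Measurable G' ∧ ∀ z, |G' z| ≤ 1})
    -- indicator integrability
    have hindint : Integrable (A.indicator (fun _ => (1:ℝ))) μ :=
      (integrable_const (1:ℝ)).indicator hAmeas
    -- construct χ₀ : S k → ℝ, a [0,1]-valued version of E[1_A | X k]
    have hsm : Measurable[C k] (μ[A.indicator (fun _ => (1:ℝ)) | C k]) :=
      stronglyMeasurable_condExp.measurable
    obtain ⟨h₀, hh₀meas, hh₀eq⟩ := doobDynkin_aux (g := X k)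
      (f := μ[A.indicator (fun _ => (1:ℝ)) | C k]) hsm
    set χ₀ : S k → ℝ := fun x => max 0 (min 1 (h₀ x)) with hχ₀
    have hχ₀meas : Measurable χ₀ := measurable_const.max (measurable_const.min hh₀meas)
    have hχ₀mem : ∀ x, χ₀ x ∈ Set.Icc (0:ℝ) 1 := by
      intro x
      constructor
      · exact le_max_left _ _
      · exact max_le zero_le_one (min_le_left _ _)
    have hver : (fun ω => χ₀ (X k ω)) =ᵐ[μ] μ[A.indicator (fun _ => (1:ℝ)) | C k] := by
      have h0 : 0 ≤ᵐ[μ] μ[A.indicator (fun _ => (1:ℝ)) | C k] :=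
        condExp_nonneg (Eventually.of_forall fun ω => Set.indicator_nonneg (fun _ _ => zero_le_one) ω)
      have h1 : μ[A.indicator (fun _ => (1:ℝ)) | C k] ≤ᵐ[μ] fun _ => (1:ℝ) := by
        have := condExp_mono (μ := μ) (m := C k) hindint (integrable_const (1:ℝ))
          (Eventually.of_forall fun ω => Set.indicator_le_self' (fun _ _ => zero_le_one) ω)
        rw [condExp_const (hC_le k)] at this
        exact this
      filter_upwards [h0, h1] with ω hω0 hω1
      have hω0' : (0:ℝ) ≤ (μ[A.indicator (fun _ => (1:ℝ)) | C k]) ω := hω0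
      have hω1' : (μ[A.indicator (fun _ => (1:ℝ)) | C k]) ω ≤ (1:ℝ) := hω1
      show max 0 (min 1 (h₀ (X k ω))) = _
      rw [← hh₀eq ω]
      rw [min_eq_right hω1', max_eq_right hω0']
    -- boundary Markov property: E[1_A | G k] = E[1_A | C k]
    have hGk : μ[A.indicator (fun _ => (1:ℝ)) | G k] =ᵐ[μ] μ[A.indicator (fun _ => (1:ℝ)) | C k] := by
      cases k with
      | zero =>
        have hFC : F 0 = C 0 := by
          show (⨆ s ∈ Set.Iic 0, MeasurableSpace.comap (X s) inferInstance)
            = MeasurableSpace.comap (X 0) inferInstance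
          apply le_antisymm
          · refine iSup₂_le fun s hs => ?_
            obtain rfl : s = 0 := Nat.le_zero.mp hs
            exact le_rfl
          · exact le_iSup₂ (f := fun s (_ : s ∈ Set.Iic 0) =>
              MeasurableSpace.comap (X s) inferInstance) 0 (Set.mem_Iic.mpr le_rfl)
        have hsmA : StronglyMeasurable[C 0] (A.indicator (fun _ => (1:ℝ))) :=
          stronglyMeasurable_const.indicator (hFC ▸ hA)
        rw [condExp_of_stronglyMeasurable (hG_le 0) (hsmA.mono (hCG 0 0 le_rfl)) hindint,
          condExp_of_stronglyMeasurable (hC_le 0) hsmA hindint]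
      | succ j =>
        have hsplit : F (j+1) = F j ⊔ C (j+1) := by
          show (⨆ s ∈ Set.Iic (j+1), MeasurableSpace.comap (X s) inferInstance)
            = (⨆ s ∈ Set.Iic j, MeasurableSpace.comap (X s) inferInstance)
              ⊔ MeasurableSpace.comap (X (j+1)) inferInstance
          have hIic : Set.Iic (j+1) = insert (j+1) (Set.Iic j) := by
            ext s
            simp [Nat.le_add_one_iff]
            tauto
          rw [hIic, iSup_insert]
          exact sup_comm _ _
        exact condexp_indicator_sup_eq μ (hF_le j) (hC_le (j+1)) (hG_le (j+1))
          (hCG (j+1) (j+1) le_rfl) (hMarkov j) A (hsplit ▸ hA)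
    -- main induction
    have key : ∀ m : ℕ,
        μ[A.indicator (fun _ => (1:ℝ)) | G (k+m)]
          =ᵐ[μ] fun ω => iterKer κ k χ₀ m (X (k+m) ω) := by
      intro m
      induction m with
      | zero => exact hGk.trans hver.symm
      | succ m ihG =>
        have hCm : μ[A.indicator (fun _ => (1:ℝ)) | C (k+m+1)]
            =ᵐ[μ] fun ω => iterKer κ k χ₀ (m+1) (X (k+m+1) ω) := by
          have step1 : μ[A.indicator (fun _ => (1:ℝ)) | C (k+m+1)]
              =ᵐ[μ] μ[ μ[A.indicator (fun _ => (1:ℝ)) | G (k+m)] | C (k+m+1)] :=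
            (condExp_condExp_of_le (hCG (k+m) (k+m+1) (Nat.le_succ _)) (hG_le (k+m))).symm
          have step2 : μ[ μ[A.indicator (fun _ => (1:ℝ)) | G (k+m)] | C (k+m+1)]
              =ᵐ[μ] μ[ (fun ω => iterKer κ k χ₀ m (X (k+m) ω)) | C (k+m+1)] :=
            condExp_congr_ae ihG
          have step3 : μ[ (fun ω => iterKer κ k χ₀ m (X (k+m) ω)) | C (k+m+1)]
              =ᵐ[μ] fun ω => ∫ y, iterKer κ k χ₀ m y ∂((κ (k+m)) (X (k+m+1) ω)) := by
            refine hker (k+m) (iterKer κ k χ₀ m)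
              (iterKer_measurable κ k χ₀ hκ hχ₀meas m) (fun x => ?_)
            have := iterKer_mem κ k χ₀ hκ hχ₀meas hχ₀mem m x
            exact abs_le.mpr ⟨by linarith [this.1], this.2⟩
          exact (step1.trans step2).trans step3
        have hGm : μ[A.indicator (fun _ => (1:ℝ)) | G (k+m+1)]
            =ᵐ[μ] μ[A.indicator (fun _ => (1:ℝ)) | C (k+m+1)] :=
          hMarkov (k+m) A (hFF k (k+m) (Nat.le_add_right _ _) A hA)
        exact hGm.trans hCm
    -- oscillation bound
    obtain ⟨c, hc⟩ := iterKer_osc κ k χ₀ hκ hχ₀meas hχ₀mem π hπ0 hSne htv n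
    set φ : Ω → ℝ := fun ω => iterKer κ k χ₀ n (X (k+n) ω) with hφ
    have hφmeas : Measurable φ :=
      (iterKer_measurable κ k χ₀ hκ hχ₀meas n).comp (hX (k+n))
    have hφc : ∀ ω, |φ ω - c| ≤ π ^ n / 2 := fun ω => hc (X (k+n) ω)
    have hφint : Integrable φ μ := by
      refine (integrable_const (1:ℝ)).mono' hφmeas.aestronglyMeasurable
        (Eventually.of_forall fun ω => ?_)
      have := iterKer_mem κ k χ₀ hκ hχ₀meas hχ₀mem n (X (k+n) ω)
      rw [Real.norm_eq_abs]
      exact abs_le.mpr ⟨by linarith [this.1], this.2⟩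
    have hGn := key n
    -- identify the two quantities
    have hAB : (μ (A ∩ B)).toReal = ∫ ω in B, φ ω ∂μ := by
      have e1 : ∫ ω in B, φ ω ∂μ = ∫ ω in B, (μ[A.indicator (fun _ => (1:ℝ)) | G (k+n)]) ω ∂μ := by
        refine setIntegral_congr_ae hBmeas ?_
        filter_upwards [hGn] with ω hω _
        exact hω.symm
      have e2 : ∫ ω in B, (μ[A.indicator (fun _ => (1:ℝ)) | G (k+n)]) ω ∂μ
          = ∫ ω in B, A.indicator (fun _ => (1:ℝ)) ω ∂μ :=
        setIntegral_condExp (hG_le (k+n)) hindint hB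
      have e3 : ∫ ω in B, A.indicator (fun _ => (1:ℝ)) ω ∂μ = (μ (A ∩ B)).toReal := by
        rw [setIntegral_indicator hAmeas, setIntegral_const]
        rw [Set.inter_comm]
        simp
        rfl
      rw [e1, e2, e3]
    have hA' : (μ A).toReal = ∫ ω, φ ω ∂μ := by
      have e1 : ∫ ω, φ ω ∂μ = ∫ ω, (μ[A.indicator (fun _ => (1:ℝ)) | G (k+n)]) ω ∂μ :=
        integral_congr_ae hGn.symm
      have e2 : ∫ ω, (μ[A.indicator (fun _ => (1:ℝ)) | G (k+n)]) ω ∂μ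
          = ∫ ω, A.indicator (fun _ => (1:ℝ)) ω ∂μ := integral_condExp (hG_le (k+n))
      have e3 : ∫ ω, A.indicator (fun _ => (1:ℝ)) ω ∂μ = (μ A).toReal := by
        rw [integral_indicator_const (1:ℝ) hAmeas]
        simp
        rfl
      rw [e1, e2, e3]
    -- final estimates
    set b : ℝ := (μ B).toReal with hb
    have bound1 : |(∫ ω in B, φ ω ∂μ) - c * b| ≤ (π ^ n / 2) * b := by
      have e : (∫ ω in B, φ ω ∂μ) - c * b = ∫ ω in B, (φ ω - c) ∂μ := by
        rw [integral_sub hφint.integrableOn (integrable_const c).integrableOn, setIntegral_const]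
        simp [hb]
        exact mul_comm _ _
      rw [e, ← Real.norm_eq_abs]
      calc ‖∫ ω in B, (φ ω - c) ∂μ‖ ≤ (π ^ n / 2) * (μ B).toReal :=
          norm_setIntegral_le_of_norm_le_const (measure_lt_top μ B)
            (fun ω _ => by rw [Real.norm_eq_abs]; exact hφc ω)
        _ = (π ^ n / 2) * b := by rw [hb]
    have bound2 : |(∫ ω, φ ω ∂μ) - c| ≤ π ^ n / 2 := by
      have e : (∫ ω, φ ω ∂μ) - c = ∫ ω, (φ ω - c) ∂μ := by
        rw [integral_sub hφint (integrable_const c), integral_const]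
        simp
      rw [e, ← Real.norm_eq_abs]
      calc ‖∫ ω, (φ ω - c) ∂μ‖ ≤ (π ^ n / 2) * (μ Set.univ).toReal :=
          norm_integral_le_of_norm_le_const
            (Eventually.of_forall fun ω => by rw [Real.norm_eq_abs]; exact hφc ω)
        _ = π ^ n / 2 := by simp
    have e1 : (μ (A ∩ B)).toReal / b - (μ A).toReal
        = ((∫ ω in B, φ ω ∂μ) - c * b) / b - ((∫ ω, φ ω ∂μ) - c) := by
      rw [hAB, hA']
      field_simp
      ring
    rw [e1]
    have b1 : |((∫ ω in B, φ ω ∂μ) - c * b) / b| ≤ π ^ n / 2 := by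
      rw [abs_div, abs_of_pos hbpos]
      rw [div_le_iff₀ hbpos]
      exact bound1
    have hb1 := abs_le.mp b1
    have hb2 := abs_le.mp bound2
    have hπn : π ^ n / 2 + π ^ n / 2 = π ^ n := by ring
    rw [abs_le]
    constructor <;> linarith [hb1.1, hb1.2, hb2.1, hb2.2]
end

section
/- Let ω : [0,1] → [0,1] be a modulus of continuity (ω(0)=0, continuous at 0), a ∈ (0,1), and for sequences x, y in ∏_{k≥j} 𝒳_k define ω_j(x,y) = sup_{n≥0} aⁿ ω(d_{j+n}(x_{j+n}, y_{j+n})). Suppose g_j : ∏_{k≥j} 𝒳_k → ℝ satisfy sup_j (‖g_j‖_∞ + v_{j,ω}(g_j)) < ∞, where v_{j,ω}(g) = sup_{x≠y} |g(x)−g(y)|/ω_j(x,y), and suppose inf_{j,x} κ_j({y : ω_j(x,y) ≤ ε}) > 0 for every small ε > 0, where κ_j is the law of (X_j, X_{j+1}, …). If ‖g_j‖_{L¹(κ_j)} → 0 as j → ∞, then for every r ∈ (0,1), ‖g_j‖_{j,ω^r} → 0, i.e. both ‖g_j‖_∞ → 0 and v_{j,ω^r}(g_j) → 0. -/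
open MeasureTheory Filter

/-- If `g_j` are uniformly bounded with uniformly bounded variation with respect to the graded
modulus `ω_j(x,y) = sup_n aⁿ ω(d_{j+n}(x_{j+n},y_{j+n}))`, balls of the graded modulus have
uniformly positive measure, and `‖g_j‖_{L¹(κ_j)} → 0`, then for every `r ∈ (0,1)` both
`‖g_j‖_∞ → 0` and the variation of `g_j` with respect to `(ω_j)^r` tends to `0`. -/
theorem stmt_7 {𝒳 : ℕ → Type*} [∀ k, MetricSpace (𝒳 k)] [∀ k, MeasurableSpace (𝒳 k)]
    (hdiam : ∀ k (x y : 𝒳 k), dist x y ≤ 1)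
    (κ : ℕ → Measure (∀ k, 𝒳 k)) (hκ : ∀ j, IsProbabilityMeasure (κ j))
    (ω : ℝ → ℝ) (hω0 : ω 0 = 0) (hωcont : ContinuousAt ω 0)
    (hω01 : ∀ u, 0 ≤ ω u ∧ ω u ≤ 1)
    (a : ℝ) (ha : a ∈ Set.Ioo (0 : ℝ) 1)
    (g : ℕ → (∀ k, 𝒳 k) → ℝ) (hmeas : ∀ j, Measurable (g j))
    (V : ℝ)
    (hbd : ∀ j x, |g j x| ≤ V)
    (hvar : ∀ j x y, |g j x - g j y| ≤
      V * ⨆ n : ℕ, a ^ n * ω (dist (x (j + n)) (y (j + n))))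
    (hball : ∀ ε > (0 : ℝ), ∃ c > (0 : ℝ), ∀ (j : ℕ) (x : ∀ k, 𝒳 k),
      c ≤ (κ j {y | ∀ n : ℕ, a ^ n * ω (dist (x (j + n)) (y (j + n))) ≤ ε}).toReal)
    (hL1 : Tendsto (fun j => ∫ x, |g j x| ∂(κ j)) atTop (nhds 0)) :
    ∀ r ∈ Set.Ioo (0 : ℝ) 1, ∀ η > (0 : ℝ), ∃ J : ℕ, ∀ j ≥ J,
      (∀ x, |g j x| ≤ η) ∧
      (∀ x y, |g j x - g j y| ≤
        η * (⨆ n : ℕ, a ^ n * ω (dist (x (j + n)) (y (j + n)))) ^ r) := by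
  -- notation for the graded modulus
  set S : ℕ → (∀ k, 𝒳 k) → (∀ k, 𝒳 k) → ℝ :=
    fun j x y => ⨆ n : ℕ, a ^ n * ω (dist (x (j + n)) (y (j + n))) with hSdef
  have hterm_nonneg : ∀ j (x y : ∀ k, 𝒳 k) (n : ℕ),
      0 ≤ a ^ n * ω (dist (x (j + n)) (y (j + n))) :=
    fun j x y n => mul_nonneg (pow_nonneg ha.1.le n) (hω01 _).1
  have hterm_le_one : ∀ j (x y : ∀ k, 𝒳 k) (n : ℕ),
      a ^ n * ω (dist (x (j + n)) (y (j + n))) ≤ 1 :=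
    fun j x y n => mul_le_one₀ (pow_le_one₀ ha.1.le ha.2.le) (hω01 _).1 (hω01 _).2
  have hbdd : ∀ j (x y : ∀ k, 𝒳 k),
      BddAbove (Set.range fun n : ℕ => a ^ n * ω (dist (x (j + n)) (y (j + n)))) := by
    intro j x y
    exact ⟨1, by rintro t ⟨n, rfl⟩; exact hterm_le_one j x y n⟩
  have hS_nonneg : ∀ j (x y : ∀ k, 𝒳 k), 0 ≤ S j x y :=
    fun j x y => Real.iSup_nonneg (hterm_nonneg j x y)
  -- handle the degenerate empty case
  rcases isEmpty_or_nonempty (∀ k, 𝒳 k) with hE | hE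
  · intro r hr η hη
    exact ⟨0, fun j _ => ⟨fun x => (hE.false x).elim, fun x y => (hE.false x).elim⟩⟩
  obtain ⟨x0⟩ := hE
  have hV0 : 0 ≤ V := le_trans (abs_nonneg _) (hbd 0 x0)
  -- integrability of |g j|
  have hint : ∀ j, Integrable (fun x => |g j x|) (κ j) := by
    intro j
    haveI := hκ j
    refine Integrable.mono' (integrable_const V) ((hmeas j).abs.aestronglyMeasurable) ?_
    exact Filter.Eventually.of_forall fun x => by
      simpa [abs_abs] using hbd j x
  have hI_nonneg : ∀ j, 0 ≤ ∫ x, |g j x| ∂(κ j) :=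
    fun j => integral_nonneg fun x => abs_nonneg _
  -- key: uniform sup-norm bound tends to 0
  have key : ∀ θ > (0 : ℝ), ∃ J : ℕ, ∀ j ≥ J, ∀ x, |g j x| ≤ θ := by
    intro θ hθ
    rcases le_or_gt V 0 with hV | hV
    · refine ⟨0, fun j _ x => le_trans (le_trans (hbd j x) hV) hθ.le⟩
    -- choose ε with V * ε ≤ θ/2
    obtain ⟨c, hc, hcball⟩ := hball (θ / (2 * V)) (by positivity)
    have hev : ∀ᶠ j in atTop, ∫ x, |g j x| ∂(κ j) < c * (θ / 2) := by
      have := hL1.eventually (eventually_lt_nhds (show (0:ℝ) < c * (θ/2) by positivity))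
      exact this
    obtain ⟨J, hJ⟩ := hev.exists_forall_of_atTop
    refine ⟨J, fun j hj x => ?_⟩
    have hIj : ∫ x, |g j x| ∂(κ j) < c * (θ / 2) := hJ j hj
    set t : ℝ := |g j x| - θ / 2 with ht
    rcases le_or_gt t (θ / 2) with h | h
    · linarith [ht ▸ h]
    exfalso
    -- on the ball B, |g j y| ≥ t
    have hsub : {y | ∀ n : ℕ, a ^ n * ω (dist (x (j + n)) (y (j + n))) ≤ θ / (2 * V)}
        ⊆ {y | t ≤ |g j y|} := by
      intro y hy
      have hSle : S j x y ≤ θ / (2 * V) := ciSup_le hy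
      have h1 : |g j x - g j y| ≤ V * (θ / (2 * V)) :=
        le_trans (hvar j x y) (by
          exact mul_le_mul_of_nonneg_left hSle hV0)
      have h2 : V * (θ / (2 * V)) = θ / 2 := by field_simp
      have h3 : |g j x| - |g j y| ≤ θ / 2 := by
        have := abs_sub_abs_le_abs_sub (g j x) (g j y)
        linarith [h1, h2 ▸ h1]
      simpa [ht] using sub_le_comm.mp h3
    have hmono : (κ j {y | ∀ n : ℕ, a ^ n * ω (dist (x (j + n)) (y (j + n))) ≤ θ / (2 * V)}).toReal
        ≤ (κ j {y | t ≤ |g j y|}).toReal := by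
      haveI := hκ j
      refine ENNReal.toReal_mono (measure_ne_top _ _) (measure_mono hsub)
    have hmarkov : t * (κ j {y | t ≤ |g j y|}).toReal ≤ ∫ x, |g j x| ∂(κ j) :=
      mul_meas_ge_le_integral_of_nonneg
        (Filter.Eventually.of_forall fun x => abs_nonneg _) (hint j) t
    have htpos : 0 < t := lt_trans (by positivity) h
    have hcle : c ≤ (κ j {y | t ≤ |g j y|}).toReal := le_trans (hcball j x) hmono
    have : t * c ≤ ∫ x, |g j x| ∂(κ j) :=
      le_trans (mul_le_mul_of_nonneg_left hcle htpos.le) hmarkov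
    have h2 : c * (θ / 2) < t * c := by nlinarith
    exact lt_irrefl (t * c) (lt_of_le_of_lt this (lt_trans hIj h2))
  -- conclude
  intro r hr η hη
  obtain ⟨hr0, hr1⟩ := hr
  rcases le_or_gt V 0 with hV | hV
  · -- g ≡ 0
    obtain ⟨J, hJ⟩ := key η hη
    refine ⟨J, fun j hj => ⟨hJ j hj, fun x y => ?_⟩⟩
    have hx : g j x = 0 := abs_eq_zero.mp (le_antisymm (le_trans (hbd j x) hV) (abs_nonneg _))
    have hy : g j y = 0 := abs_eq_zero.mp (le_antisymm (le_trans (hbd j y) hV) (abs_nonneg _))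
    rw [hx, hy, sub_zero, abs_zero]
    exact mul_nonneg hη.le (Real.rpow_nonneg (hS_nonneg j x y) r)
  -- V > 0 : choose the threshold s0
  set s0 : ℝ := (η / V) ^ (1 / (1 - r)) with hs0def
  have hs0pos : 0 < s0 := Real.rpow_pos_of_pos (by positivity) _
  have hs0pow : s0 ^ (1 - r) = η / V := by
    rw [hs0def, ← Real.rpow_mul (by positivity : (0:ℝ) ≤ η / V), one_div,
      inv_mul_cancel₀ (by linarith : (1:ℝ) - r ≠ 0), Real.rpow_one]
  set θ : ℝ := min η (η * s0 ^ r / 2) with hθdef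
  have hθpos : 0 < θ := lt_min hη (by positivity)
  obtain ⟨J, hJ⟩ := key θ hθpos
  refine ⟨J, fun j hj => ⟨fun x => le_trans (hJ j hj x) (min_le_left _ _), fun x y => ?_⟩⟩
  have hSnn := hS_nonneg j x y
  rcases eq_or_lt_of_le hSnn with hS0 | hSpos
  · -- S = 0 : then g j x = g j y
    have : |g j x - g j y| ≤ 0 := by
      have := hvar j x y
      rw [hSdef] at hS0
      simpa [← hS0] using this
    have h0 : |g j x - g j y| = 0 := le_antisymm this (abs_nonneg _)
    rw [h0]
    exact mul_nonneg hη.le (Real.rpow_nonneg hSnn r)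
  rcases le_or_gt s0 (S j x y) with hcase | hcase
  · -- large S : use the sup bound
    have h2M : |g j x - g j y| ≤ 2 * θ := by
      calc |g j x - g j y| ≤ |g j x| + |g j y| := abs_sub _ _
        _ ≤ θ + θ := add_le_add (hJ j hj x) (hJ j hj y)
        _ = 2 * θ := by ring
    have : 2 * θ ≤ η * s0 ^ r := by
      have := min_le_right η (η * s0 ^ r / 2)
      rw [← hθdef] at this
      linarith
    refine le_trans h2M (le_trans this ?_)
    exact mul_le_mul_of_nonneg_left
      (Real.rpow_le_rpow hs0pos.le hcase hr0.le) hη.le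
  · -- small S : interpolate
    have hSr : S j x y = S j x y ^ (1 - r) * S j x y ^ r := by
      rw [← Real.rpow_add hSpos, sub_add_cancel, Real.rpow_one]
    calc |g j x - g j y| ≤ V * S j x y := hvar j x y
      _ = V * (S j x y ^ (1 - r) * S j x y ^ r) := by rw [← hSr]
      _ ≤ V * (s0 ^ (1 - r) * S j x y ^ r) := by
          refine mul_le_mul_of_nonneg_left (mul_le_mul_of_nonneg_right
            (Real.rpow_le_rpow hSnn hcase.le (by linarith)) (Real.rpow_nonneg hSnn r)) hV.le
      _ = η * S j x y ^ r := by rw [hs0pow]; field_simp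
end

section
/- Let (f_j)_{j≥0} be real-valued functions on sequence spaces 𝒳_{j,∞} = ∏_{k≥j} 𝒳_k satisfying sup_j v_{j,ω}(f_j) < ∞ with respect to the graded modulus ω_j(x,y) = sup_{n≥0} aⁿ ω(d_{j+n}(x_{j+n},y_{j+n})), a ∈ (0,1), and sup_j ‖f_j‖_∞ < ∞. Fix a point α = (α_j)_{j≥0}. Define H_k : 𝒳_{k,∞} → ℝ by H_k(x) = Σ_{m=0}^{k-1} ( f_m(α_m,…,α_{k-1},x) − f_m(α_m, α_{m+1}, …) ). Then sup_k ‖H_k‖_{k,ω} < ∞, i.e. the H_k are uniformly bounded and satisfy |H_k(x)−H_k(y)| ≤ C ω_k(x,y) for a constant C independent of k. -/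
open Finset

lemma stmt10_bdd {a : ℝ} (ha0 : 0 < a) (ha1 : a < 1) (g : ℕ → ℝ)
    (hg0 : ∀ n, 0 ≤ g n) (hg1 : ∀ n, g n ≤ 1) :
    BddAbove (Set.range fun n => a ^ n * g n) := by
  refine ⟨1, ?_⟩
  rintro _ ⟨n, rfl⟩
  calc a ^ n * g n ≤ 1 * 1 := by
        apply mul_le_mul _ (hg1 n) (hg0 n) zero_le_one
        exact pow_le_one₀ ha0.le ha1.le
    _ = 1 := by ring

lemma stmt10_sup_le_one {a : ℝ} (ha0 : 0 < a) (ha1 : a < 1) (g : ℕ → ℝ)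
    (hg0 : ∀ n, 0 ≤ g n) (hg1 : ∀ n, g n ≤ 1) :
    (⨆ n, a ^ n * g n) ≤ 1 := by
  apply ciSup_le
  intro n
  calc a ^ n * g n ≤ 1 * 1 := by
        apply mul_le_mul _ (hg1 n) (hg0 n) zero_le_one
        exact pow_le_one₀ ha0.le ha1.le
    _ = 1 := by ring

lemma stmt10_key {a : ℝ} (ha0 : 0 < a) (ha1 : a < 1) (g : ℕ → ℝ)
    (hg0 : ∀ n, 0 ≤ g n) (hg1 : ∀ n, g n ≤ 1) (t : ℕ)
    (hz : ∀ n, n < t → g n = 0) :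
    (⨆ n, a ^ n * g n) ≤ a ^ t * ⨆ n, a ^ n * g (t + n) := by
  have hb : BddAbove (Set.range fun n => a ^ n * g (t + n)) :=
    stmt10_bdd ha0 ha1 _ (fun n => hg0 _) (fun n => hg1 _)
  have hS0 : 0 ≤ ⨆ n, a ^ n * g (t + n) :=
    Real.iSup_nonneg fun n => mul_nonneg (pow_nonneg ha0.le n) (hg0 _)
  apply ciSup_le
  intro n
  by_cases hn : n < t
  · rw [hz n hn, mul_zero]
    exact mul_nonneg (pow_nonneg ha0.le t) hS0
  · obtain ⟨p, rfl⟩ : ∃ p, n = t + p := ⟨n - t, by omega⟩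
    rw [pow_add, mul_assoc]
    exact mul_le_mul_of_nonneg_left (le_ciSup hb p) (pow_nonneg ha0.le t)

lemma stmt10_geom {a : ℝ} (ha0 : 0 < a) (ha1 : a < 1) (k : ℕ) :
    ∑ m ∈ range k, a ^ (k - m) ≤ a / (1 - a) := by
  have h1 : ∑ m ∈ range k, a ^ (k - m) = ∑ m ∈ range k, a ^ (m + 1) := by
    rw [← Finset.sum_range_reflect (fun m => a ^ (m + 1)) k]
    apply Finset.sum_congr rfl
    intro j hj
    simp only [Finset.mem_range] at hj
    congr 1
    omega
  have h2 : ∑ j ∈ range k, a ^ j ≤ (1 - a)⁻¹ := by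
    have hsum : ∑' n : ℕ, a ^ n = (1 - a)⁻¹ :=
      tsum_geometric_of_lt_one ha0.le ha1
    calc ∑ j ∈ range k, a ^ j
        ≤ ∑' n : ℕ, a ^ n :=
          Summable.sum_le_tsum _ (fun i _ => pow_nonneg ha0.le i)
            (summable_geometric_of_lt_one ha0.le ha1)
      _ = (1 - a)⁻¹ := hsum
  have h3 : ∑ m ∈ range k, a ^ (m + 1) = (∑ j ∈ range k, a ^ j) * a := by
    rw [Finset.sum_mul]
    apply Finset.sum_congr rfl
    intro j _
    rw [pow_succ]
  rw [h1, h3, div_eq_mul_inv, mul_comm]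
  exact mul_le_mul_of_nonneg_left h2 ha0.le

/-- The a-priori coboundary functions: with
`H_k(x) = Σ_{m<k} ( f_m(α_m,…,α_{k−1},x) − f_m(α_m,α_{m+1},…) )` (encoded in absolute
coordinates, replacing the coordinates below `k` by the reference point `α`), the family
`(H_k)` is uniformly bounded and uniformly Lipschitz with respect to the graded modulus
`ω_k(x,y) = sup_n aⁿ ω(d_{k+n}(x_{k+n},y_{k+n}))`. -/
theorem stmt_10 {𝒳 : ℕ → Type*} [∀ k, MetricSpace (𝒳 k)]
    (hdiam : ∀ k (x y : 𝒳 k), dist x y ≤ 1)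
    (ω : ℝ → ℝ) (hω0 : ω 0 = 0) (hω01 : ∀ u, 0 ≤ ω u ∧ ω u ≤ 1)
    (a : ℝ) (ha : a ∈ Set.Ioo (0 : ℝ) 1)
    (f : ℕ → (∀ k, 𝒳 k) → ℝ) (V : ℝ)
    (hbd : ∀ j x, |f j x| ≤ V)
    (hvar : ∀ j x y, |f j x - f j y| ≤
      V * ⨆ n : ℕ, a ^ n * ω (dist (x (j + n)) (y (j + n))))
    (α : ∀ k, 𝒳 k) :
    ∃ C : ℝ, ∀ (k : ℕ) (x y : ∀ i, 𝒳 i),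
      |∑ m ∈ range k, (f m (fun i => if i < k then α i else x i) - f m α)| ≤ C ∧
      |(∑ m ∈ range k, (f m (fun i => if i < k then α i else x i) - f m α)) -
          (∑ m ∈ range k, (f m (fun i => if i < k then α i else y i) - f m α))| ≤
        C * ⨆ n : ℕ, a ^ n * ω (dist (x (k + n)) (y (k + n))) := by
  obtain ⟨ha0, ha1⟩ := ha
  have hV : 0 ≤ V := le_trans (abs_nonneg _) (hbd 0 α)
  refine ⟨V * (a / (1 - a)), ?_⟩
  intro k x y
  -- key per-term estimate
  have main : ∀ (u v : ∀ i, 𝒳 i), (∀ i, i < k → u i = v i) → ∀ m, m < k →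
      |f m u - f m v| ≤
        V * (a ^ (k - m) * ⨆ n, a ^ n * ω (dist (u (k + n)) (v (k + n)))) := by
    intro u v huv m hm
    set g : ℕ → ℝ := fun n => ω (dist (u (m + n)) (v (m + n))) with hg
    have hg0 : ∀ n, 0 ≤ g n := fun n => (hω01 _).1
    have hg1 : ∀ n, g n ≤ 1 := fun n => (hω01 _).2
    have hz : ∀ n, n < k - m → g n = 0 := by
      intro n hn
      have : u (m + n) = v (m + n) := huv _ (by omega)
      simp [hg, this, hω0]
    have hshift : (fun n => a ^ n * g (k - m + n)) =
        fun n => a ^ n * ω (dist (u (k + n)) (v (k + n))) := by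
      funext n
      have h : m + (k - m + n) = k + n := by omega
      simp only [hg]
      rw [h]
    calc |f m u - f m v|
        ≤ V * ⨆ n, a ^ n * ω (dist (u (m + n)) (v (m + n))) := hvar m u v
      _ ≤ V * (a ^ (k - m) * ⨆ n, a ^ n * ω (dist (u (k + n)) (v (k + n)))) := by
          apply mul_le_mul_of_nonneg_left _ hV
          have := stmt10_key ha0 ha1 g hg0 hg1 (k - m) hz
          rw [hshift] at this
          exact this
  set u : ∀ i, 𝒳 i := fun i => if i < k then α i else x i with hu
  set v : ∀ i, 𝒳 i := fun i => if i < k then α i else y i with hv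
  have huv : ∀ i, i < k → u i = v i := by intro i hi; simp [hu, hv, hi]
  have huα : ∀ i, i < k → u i = α i := by intro i hi; simp [hu, hi]
  have hutop : ∀ n, u (k + n) = x (k + n) := by
    intro n; simp [hu, Nat.not_lt.mpr (Nat.le_add_right k n)]
  have hvtop : ∀ n, v (k + n) = y (k + n) := by
    intro n; simp [hv, Nat.not_lt.mpr (Nat.le_add_right k n)]
  constructor
  · -- uniform bound
    have hterm : ∀ m ∈ range k, |f m u - f m α| ≤ V * a ^ (k - m) := by
      intro m hm
      simp only [Finset.mem_range] at hm
      have h1 := main u α huα m hm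
      have hS1 : (⨆ n, a ^ n * ω (dist (u (k + n)) (α (k + n)))) ≤ 1 :=
        stmt10_sup_le_one ha0 ha1 _ (fun n => (hω01 _).1) (fun n => (hω01 _).2)
      calc |f m u - f m α|
          ≤ V * (a ^ (k - m) * ⨆ n, a ^ n * ω (dist (u (k + n)) (α (k + n)))) := h1
        _ ≤ V * (a ^ (k - m) * 1) := by
            apply mul_le_mul_of_nonneg_left _ hV
            exact mul_le_mul_of_nonneg_left hS1 (pow_nonneg ha0.le _)
        _ = V * a ^ (k - m) := by ring
    calc |∑ m ∈ range k, (f m u - f m α)|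
        ≤ ∑ m ∈ range k, |f m u - f m α| := Finset.abs_sum_le_sum_abs _ _
      _ ≤ ∑ m ∈ range k, V * a ^ (k - m) := Finset.sum_le_sum hterm
      _ = V * ∑ m ∈ range k, a ^ (k - m) := by rw [Finset.mul_sum]
      _ ≤ V * (a / (1 - a)) :=
          mul_le_mul_of_nonneg_left (stmt10_geom ha0 ha1 k) hV
  · -- Lipschitz bound
    set S : ℝ := ⨆ n : ℕ, a ^ n * ω (dist (x (k + n)) (y (k + n))) with hS
    have hS0 : 0 ≤ S :=
      Real.iSup_nonneg fun n => mul_nonneg (pow_nonneg ha0.le n) (hω01 _).1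
    have hSeq : (⨆ n, a ^ n * ω (dist (u (k + n)) (v (k + n)))) = S := by
      rw [hS]; congr 1; funext n; rw [hutop n, hvtop n]
    have hterm : ∀ m ∈ range k, |f m u - f m v| ≤ V * S * a ^ (k - m) := by
      intro m hm
      simp only [Finset.mem_range] at hm
      have h1 := main u v huv m hm
      rw [hSeq] at h1
      calc |f m u - f m v| ≤ V * (a ^ (k - m) * S) := h1
        _ = V * S * a ^ (k - m) := by ring
    have hsum : (∑ m ∈ range k, (f m u - f m α)) - ∑ m ∈ range k, (f m v - f m α)
        = ∑ m ∈ range k, (f m u - f m v) := by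
      rw [← Finset.sum_sub_distrib]
      apply Finset.sum_congr rfl
      intro m _
      ring
    rw [hsum]
    calc |∑ m ∈ range k, (f m u - f m v)|
        ≤ ∑ m ∈ range k, |f m u - f m v| := Finset.abs_sum_le_sum_abs _ _
      _ ≤ ∑ m ∈ range k, V * S * a ^ (k - m) := Finset.sum_le_sum hterm
      _ = V * S * ∑ m ∈ range k, a ^ (k - m) := by rw [Finset.mul_sum]
      _ ≤ V * S * (a / (1 - a)) :=
          mul_le_mul_of_nonneg_left (stmt10_geom ha0 ha1 k) (mul_nonneg hV hS0)
      _ = V * (a / (1 - a)) * S := by ring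
end

section
/- Sinai's lemma for sequential shifts: Let 𝒳_k (k ∈ ℤ) be metric spaces with metrics d_k of diameter ≤ 1, ω a modulus of continuity with values in [0,1], a ∈ (0,1), and let 𝒴_j = ∏_{k∈ℤ} 𝒳_k with two-sided graded modulus ω_{j,a}(x,y) = sup_{n∈ℤ} a^{|n|} ω(d_{j+n}(x_{j+n},y_{j+n})). Suppose f_j : 𝒴_j → ℝ (depending on all coordinates) satisfy sup_j(‖f_j‖_∞ + v_{j,a,ω}(f_j)) < ∞. Then there exist functions u_j : 𝒴_j → ℝ and g_j depending only on the coordinates (x_j, x_{j+1}, …) such that f_j(x) = u_{j+1}(σx) − u_j(x) + g_j(x_j, x_{j+1}, …) where σ is the left shift, and sup_j ‖u_j‖_{j, a^{1/3}, ω^{1/3}} < ∞, sup_j ‖g_j‖_{j, a^{1/3}, ω^{1/3}} < ∞. -/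
private lemma sinai_cube_rpow (z : ℝ) (hz : 0 ≤ z) : (z ^ ((1:ℝ)/3)) ^ (3:ℕ) = z := by
  rw [← Real.rpow_natCast (z ^ ((1:ℝ)/3)) 3, ← Real.rpow_mul hz]
  norm_num

private lemma sinai_min_le (X Y : ℝ) (hX : 0 ≤ X) (hY : 0 < Y) :
    min ((Y^3)⁻¹ * X^3) (Y^3) ≤ X * Y := by
  rcases le_total ((Y^3)⁻¹ * X^3) (Y^3) with h | h
  · have h1 : X^3 ≤ Y^3 * Y^3 := by rwa [inv_mul_le_iff₀ (by positivity)] at h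
    have h2 : X ≤ Y^2 := by
      apply le_of_pow_le_pow_left₀ (n := 3) (by norm_num) (by positivity)
      nlinarith
    calc min ((Y^3)⁻¹ * X^3) (Y^3) ≤ (Y^3)⁻¹ * X^3 := min_le_left _ _
      _ ≤ X * Y := by
          rw [inv_mul_le_iff₀ (by positivity)]
          nlinarith [mul_le_mul h2 h2 hX (by positivity : (0:ℝ) ≤ Y^2), hY.le]
  · have h1 : Y^3 * Y^3 ≤ X^3 := by rwa [le_inv_mul_iff₀ (by positivity)] at h
    have h2 : Y^2 ≤ X := by
      apply le_of_pow_le_pow_left₀ (n := 3) (by norm_num) hX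
      nlinarith
    calc min ((Y^3)⁻¹ * X^3) (Y^3) ≤ Y^3 := min_le_right _ _
      _ ≤ X * Y := by nlinarith

set_option maxHeartbeats 1000000 in
/-- Sinai's lemma for sequential shifts, in absolute coordinates on the two-sided product
`∏_{k∈ℤ} 𝒳_k`: if the `f_j` are uniformly bounded with uniformly bounded variation for the
two-sided graded modulus `ω_{j,a}(x,y) = sup_{n∈ℤ} a^{|n|} ω(d_{j+n}(x_{j+n},y_{j+n}))`, then
`f_j = u_{j+1} − u_j + g_j` where `g_j` depends only on the coordinates `(x_k)_{k ≥ j}` and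
both `u_j, g_j` have uniformly bounded `(a^{1/3}, ω^{1/3})`-norms. -/
theorem stmt_11 {𝒳 : ℤ → Type*} [∀ k, MetricSpace (𝒳 k)]
    (hdiam : ∀ (k : ℤ) (x y : 𝒳 k), dist x y ≤ 1)
    (ω : ℝ → ℝ) (hω0 : ω 0 = 0) (hω01 : ∀ u, 0 ≤ ω u ∧ ω u ≤ 1)
    (a : ℝ) (ha : a ∈ Set.Ioo (0 : ℝ) 1)
    (f : ℤ → (∀ k : ℤ, 𝒳 k) → ℝ) (V : ℝ)
    (hbd : ∀ j x, |f j x| ≤ V)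
    (hvar : ∀ j x y, |f j x - f j y| ≤
      V * ⨆ n : ℤ, a ^ n.natAbs * ω (dist (x (j + n)) (y (j + n)))) :
    ∃ (V' : ℝ) (u g : ℤ → (∀ k : ℤ, 𝒳 k) → ℝ),
      (∀ j x, |u j x| ≤ V') ∧
      (∀ j x y, |u j x - u j y| ≤
        V' * ⨆ n : ℤ, (a ^ ((1 : ℝ) / 3)) ^ n.natAbs *
          (ω (dist (x (j + n)) (y (j + n)))) ^ ((1 : ℝ) / 3)) ∧
      (∀ j x, |g j x| ≤ V') ∧
      (∀ j x y, |g j x - g j y| ≤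
        V' * ⨆ n : ℕ, (a ^ ((1 : ℝ) / 3)) ^ n *
          (ω (dist (x (j + n)) (y (j + n)))) ^ ((1 : ℝ) / 3)) ∧
      (∀ (j : ℤ) (x y : ∀ k : ℤ, 𝒳 k), (∀ k, j ≤ k → x k = y k) → g j x = g j y) ∧
      (∀ j x, f j x = u (j + 1) x - u j x + g j x) := by
  obtain ⟨ha0, ha1⟩ := ha
  by_cases hne : Nonempty (∀ k : ℤ, 𝒳 k)
  swap
  · exact ⟨0, (fun _ _ => 0), (fun _ _ => 0),
      fun j x => absurd ⟨x⟩ hne, fun j x => absurd ⟨x⟩ hne,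
      fun j x => absurd ⟨x⟩ hne, fun j x => absurd ⟨x⟩ hne,
      fun j x => absurd ⟨x⟩ hne, fun j x => absurd ⟨x⟩ hne⟩
  obtain ⟨α⟩ := hne
  have hV : 0 ≤ V := le_trans (abs_nonneg _) (hbd 0 α)
  have hω_nn : ∀ u, 0 ≤ ω u := fun u => (hω01 u).1
  have hω_le1 : ∀ u, ω u ≤ 1 := fun u => (hω01 u).2
  set s : ℝ := a ^ ((1:ℝ)/3) with hs_def
  have hs0 : 0 < s := Real.rpow_pos_of_pos ha0 _
  have hs1 : s < 1 := Real.rpow_lt_one ha0.le ha1 (by norm_num)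
  have hs_cube : s ^ (3:ℕ) = a := sinai_cube_rpow a ha0.le
  have hsY : ∀ k : ℕ, (s ^ k) ^ (3:ℕ) = a ^ k := by
    intro k; rw [← pow_mul, mul_comm, pow_mul, hs_cube]
  -- coordinate replacement map
  set R : ℤ → (∀ k : ℤ, 𝒳 k) → (∀ k : ℤ, 𝒳 k) :=
    (fun j x k => if j ≤ k then x k else α k) with hR
  have hR_ge : ∀ j x k, j ≤ k → R j x k = x k := fun j x k h => if_pos h
  have hR_lt : ∀ j x k, ¬ j ≤ k → R j x k = α k := fun j x k h => if_neg h
  -- boundedness of the sup families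
  have hBdd : ∀ {ι : Type} (h : ι → ℝ), (∀ i, h i ≤ 1) → BddAbove (Set.range h) := by
    intro ι h hh; exact ⟨1, by rintro _ ⟨i, rfl⟩; exact hh i⟩
  have helem1 : ∀ (m : ℕ) (d : ℝ), a ^ m * ω d ≤ 1 := by
    intro m d
    nlinarith [pow_le_one₀ ha0.le ha1.le (n := m), pow_nonneg ha0.le m, hω_nn d, hω_le1 d]
  have helem1s : ∀ (m : ℕ) (d : ℝ), s ^ m * ω d ^ ((1:ℝ)/3) ≤ 1 := by
    intro m d
    have h1 : ω d ^ ((1:ℝ)/3) ≤ 1 := Real.rpow_le_one (hω_nn d) (hω_le1 d) (by norm_num)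
    have h2 : (0:ℝ) ≤ ω d ^ ((1:ℝ)/3) := Real.rpow_nonneg (hω_nn d) _
    nlinarith [pow_le_one₀ hs0.le hs1.le (n := m), pow_nonneg hs0.le m]
  have hBddZ : ∀ (j : ℤ) (x y : ∀ k, 𝒳 k),
      BddAbove (Set.range fun n : ℤ => a ^ n.natAbs * ω (dist (x (j+n)) (y (j+n)))) :=
    fun j x y => hBdd _ (fun n => helem1 _ _)
  have hBddN : ∀ (j : ℤ) (x y : ∀ k, 𝒳 k),
      BddAbove (Set.range fun n : ℕ => a ^ n * ω (dist (x (j+n)) (y (j+n)))) :=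
    fun j x y => hBdd _ (fun n => helem1 _ _)
  have hBddTz : ∀ (j : ℤ) (x y : ∀ k, 𝒳 k),
      BddAbove (Set.range fun n : ℤ => s ^ n.natAbs * ω (dist (x (j+n)) (y (j+n))) ^ ((1:ℝ)/3)) :=
    fun j x y => hBdd _ (fun n => helem1s _ _)
  have hBddTn : ∀ (j : ℤ) (x y : ∀ k, 𝒳 k),
      BddAbove (Set.range fun n : ℕ => s ^ n * ω (dist (x (j+n)) (y (j+n))) ^ ((1:ℝ)/3)) :=
    fun j x y => hBdd _ (fun n => helem1s _ _)
  have hΩZ_nn : ∀ (j : ℤ) (x y : ∀ k, 𝒳 k),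
      0 ≤ ⨆ n : ℤ, a ^ n.natAbs * ω (dist (x (j+n)) (y (j+n))) := by
    intro j x y
    have h0 : (0:ℝ) ≤ a ^ (0:ℤ).natAbs * ω (dist (x (j+0)) (y (j+0))) :=
      mul_nonneg (pow_nonneg ha0.le _) (hω_nn _)
    exact h0.trans (le_ciSup (hBddZ j x y) 0)
  have hΩN_nn : ∀ (j : ℤ) (x y : ∀ k, 𝒳 k),
      0 ≤ ⨆ n : ℕ, a ^ n * ω (dist (x (j+n)) (y (j+n))) := by
    intro j x y
    have h0 : (0:ℝ) ≤ a ^ (0:ℕ) * ω (dist (x (j+(0:ℕ))) (y (j+(0:ℕ)))) :=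
      mul_nonneg (pow_nonneg ha0.le _) (hω_nn _)
    exact h0.trans (le_ciSup (hBddN j x y) 0)
  -- key variation lemma, two-sided version
  have lemZ : ∀ (j : ℤ) (K : ℕ) (x y x' y' : ∀ k, 𝒳 k),
      (∀ m, x' m = y' m ∨ (x' m = x m ∧ y' m = y m)) →
      |f (j + K) x' - f (j + K) y'| ≤
        V * ((a ^ K)⁻¹ * ⨆ n : ℤ, a ^ n.natAbs * ω (dist (x (j+n)) (y (j+n)))) := by
    intro j K x y x' y' hP
    refine (hvar (j + K) x' y').trans (mul_le_mul_of_nonneg_left (ciSup_le fun n => ?_) hV)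
    have hrhs : (0:ℝ) ≤ (a ^ K)⁻¹ * ⨆ n : ℤ, a ^ n.natAbs * ω (dist (x (j+n)) (y (j+n))) :=
      mul_nonneg (inv_nonneg.mpr (pow_nonneg ha0.le K)) (hΩZ_nn j x y)
    rcases hP (j + K + n) with he | ⟨hx', hy'⟩
    · rw [he, dist_self, hω0, mul_zero]; exact hrhs
    · rw [hx', hy']
      have hidx : j + (K:ℤ) + n = j + ((K:ℤ) + n) := by ring
      rw [hidx]
      have h1 : a ^ n.natAbs ≤ (a ^ K)⁻¹ * a ^ ((K:ℤ) + n).natAbs := by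
        rw [le_inv_mul_iff₀ (by positivity), ← pow_add]
        refine pow_le_pow_of_le_one ha0.le ha1.le ?_
        have := Int.natAbs_add_le (K:ℤ) n
        omega
      calc a ^ n.natAbs * ω (dist (x (j + ((K:ℤ)+n))) (y (j + ((K:ℤ)+n))))
          ≤ ((a ^ K)⁻¹ * a ^ ((K:ℤ)+n).natAbs) * ω (dist (x (j + ((K:ℤ)+n))) (y (j + ((K:ℤ)+n)))) :=
            mul_le_mul_of_nonneg_right h1 (hω_nn _)
        _ = (a ^ K)⁻¹ * (a ^ ((K:ℤ)+n).natAbs * ω (dist (x (j + ((K:ℤ)+n))) (y (j + ((K:ℤ)+n))))) := by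
            ring
        _ ≤ (a ^ K)⁻¹ * ⨆ n : ℤ, a ^ n.natAbs * ω (dist (x (j+n)) (y (j+n))) :=
            mul_le_mul_of_nonneg_left (le_ciSup (hBddZ j x y) ((K:ℤ)+n)) (by positivity)
  -- key variation lemma, one-sided version
  have lemN : ∀ (j : ℤ) (K : ℕ) (x y x' y' : ∀ k, 𝒳 k),
      (∀ m, x' m = y' m ∨ (j ≤ m ∧ x' m = x m ∧ y' m = y m)) →
      |f (j + K) x' - f (j + K) y'| ≤
        V * ((a ^ K)⁻¹ * ⨆ n : ℕ, a ^ n * ω (dist (x (j+n)) (y (j+n)))) := by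
    intro j K x y x' y' hP
    refine (hvar (j + K) x' y').trans (mul_le_mul_of_nonneg_left (ciSup_le fun n => ?_) hV)
    have hrhs : (0:ℝ) ≤ (a ^ K)⁻¹ * ⨆ n : ℕ, a ^ n * ω (dist (x (j+n)) (y (j+n))) :=
      mul_nonneg (inv_nonneg.mpr (pow_nonneg ha0.le K)) (hΩN_nn j x y)
    rcases hP (j + K + n) with he | ⟨hm, hx', hy'⟩
    · rw [he, dist_self, hω0, mul_zero]; exact hrhs
    · rw [hx', hy']
      set p : ℕ := ((K:ℤ) + n).natAbs with hp
      have hpn : ((p:ℤ)) = (K:ℤ) + n := by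
        have : (0:ℤ) ≤ (K:ℤ) + n := by omega
        simpa [hp] using Int.natAbs_of_nonneg this
      have hidx : j + (K:ℤ) + n = j + (p:ℤ) := by omega
      rw [hidx]
      have h1 : a ^ n.natAbs ≤ (a ^ K)⁻¹ * a ^ p := by
        rw [le_inv_mul_iff₀ (by positivity), ← pow_add]
        refine pow_le_pow_of_le_one ha0.le ha1.le ?_
        have := Int.natAbs_add_le (K:ℤ) n
        omega
      calc a ^ n.natAbs * ω (dist (x (j + (p:ℤ))) (y (j + (p:ℤ))))
          ≤ ((a ^ K)⁻¹ * a ^ p) * ω (dist (x (j + (p:ℤ))) (y (j + (p:ℤ)))) :=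
            mul_le_mul_of_nonneg_right h1 (hω_nn _)
        _ = (a ^ K)⁻¹ * (a ^ p * ω (dist (x (j + (p:ℤ))) (y (j + (p:ℤ))))) := by ring
        _ ≤ (a ^ K)⁻¹ * ⨆ n : ℕ, a ^ n * ω (dist (x (j+n)) (y (j+n))) :=
            mul_le_mul_of_nonneg_left (le_ciSup (hBddN j x y) p) (by positivity)
  -- geometric smallness lemma
  have lemA : ∀ (j : ℤ) (K : ℕ) (x' y' : ∀ k, 𝒳 k), (∀ m, j ≤ m → x' m = y' m) →
      |f (j + K) x' - f (j + K) y'| ≤ V * a ^ (K+1) := by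
    intro j K x' y' hP
    refine (hvar (j + K) x' y').trans (mul_le_mul_of_nonneg_left (ciSup_le fun n => ?_) hV)
    by_cases h : j ≤ j + K + n
    · rw [hP _ h, dist_self, hω0, mul_zero]
      exact pow_nonneg ha0.le _
    · have hn : K + 1 ≤ n.natAbs := by omega
      calc a ^ n.natAbs * ω (dist (x' (j + K + n)) (y' (j + K + n)))
          ≤ a ^ n.natAbs * 1 := mul_le_mul_of_nonneg_left (hω_le1 _) (by positivity)
        _ = a ^ n.natAbs := mul_one _
        _ ≤ a ^ (K+1) := pow_le_pow_of_le_one ha0.le ha1.le hn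
  -- the summands of u
  set T : ℤ → ℕ → (∀ k : ℤ, 𝒳 k) → ℝ :=
    (fun j k x => f (j + k) x - f (j + k) (R j x)) with hT
  have hT_abs : ∀ j k x, |T j k x| ≤ V * a ^ (k+1) :=
    fun j k x => lemA j k x (R j x) (fun m hm => (hR_ge j x m hm).symm)
  have hgeo : Summable (fun k : ℕ => V * a ^ (k+1)) := by
    have := (summable_geometric_of_lt_one ha0.le ha1).mul_left (V * a)
    refine this.congr fun k => by ring
  have hT_sum : ∀ j x, Summable (fun k : ℕ => T j k x) := by
    intro j x
    refine Summable.of_norm_bounded hgeo (fun k => ?_)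
    simpa [Real.norm_eq_abs] using hT_abs j k x
  have hT_sum1 : ∀ j x, Summable (fun k : ℕ => T j (k+1) x) :=
    fun j x => (summable_nat_add_iff 1).2 (hT_sum j x)
  -- u and g
  set u : ℤ → (∀ k : ℤ, 𝒳 k) → ℝ := (fun j x => -∑' k : ℕ, T j k x) with hu
  set g : ℤ → (∀ k : ℤ, 𝒳 k) → ℝ := (fun j x => f j x - u (j+1) x + u j x) with hg
  -- the summands of the closed form of g
  set G : ℤ → ℕ → (∀ k : ℤ, 𝒳 k) → ℝ :=
    (fun j k x => f (j + 1 + k) (R j x) - f (j + 1 + k) (R (j+1) x)) with hG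
  have hG_abs : ∀ j k x, |G j k x| ≤ V * a ^ (k+1) := by
    intro j k x
    refine lemA (j+1) k (R j x) (R (j+1) x) (fun m hm => ?_)
    rw [hR_ge _ _ _ (by omega : j ≤ m), hR_ge _ _ _ hm]
  have hG_sum : ∀ j x, Summable (fun k : ℕ => G j k x) := by
    intro j x
    refine Summable.of_norm_bounded hgeo (fun k => ?_)
    simpa [Real.norm_eq_abs] using hG_abs j k x
  -- closed form of g
  have hgform : ∀ j x, g j x = f j (R j x) + ∑' k : ℕ, G j k x := by
    intro j x
    have h1 : ∑' k : ℕ, T j k x = T j 0 x + ∑' k : ℕ, T j (k+1) x := Summable.tsum_eq_zero_add (hT_sum j x)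
    have h2 : ∀ k : ℕ, G j k x = T (j+1) k x - T j (k+1) x := by
      intro k
      have hidx : j + (((k:ℕ)+1 : ℕ) : ℤ) = j + 1 + (k:ℤ) := by push_cast; ring
      simp only [hT, hG, hidx]
      ring
    have h3 : ∑' k : ℕ, G j k x = (∑' k : ℕ, T (j+1) k x) - ∑' k : ℕ, T j (k+1) x := by
      rw [tsum_congr h2, Summable.tsum_sub (hT_sum (j+1) x) (hT_sum1 j x)]
    have h0 : T j 0 x = f j x - f j (R j x) := by
      simp only [hT, Nat.cast_zero, add_zero]
    simp only [hg, hu]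
    have := h1
    rw [h0] at this
    linarith [h3, this]
  -- tsum of the geometric bound
  have htsum_geo : ∑' k : ℕ, V * a ^ (k+1) = V * a * (1-a)⁻¹ := by
    calc ∑' k : ℕ, V * a ^ (k+1) = ∑' k : ℕ, (V * a) * a ^ k := tsum_congr fun k => by ring
      _ = (V * a) * ∑' k : ℕ, a ^ k := tsum_mul_left
      _ = V * a * (1-a)⁻¹ := by rw [tsum_geometric_of_lt_one ha0.le ha1]
  have ha' : (0:ℝ) < 1 - a := by linarith
  have hs' : (0:ℝ) < 1 - s := by linarith
  set D1 : ℝ := V * a * (1-a)⁻¹ with hD1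
  have hD1nn : 0 ≤ D1 := mul_nonneg (mul_nonneg hV ha0.le) (inv_nonneg.mpr ha'.le)
  set D2 : ℝ := 2 * V * (1-s)⁻¹ with hD2
  have hD2nn : 0 ≤ D2 := mul_nonneg (by linarith) (inv_nonneg.mpr hs'.le)
  refine ⟨V + D1 + D2, u, g, ?_, ?_, ?_, ?_, ?_, ?_⟩
  · -- bound on u
    intro j x
    have habs : Summable (fun k : ℕ => |T j k x|) :=
      Summable.of_nonneg_of_le (fun k => abs_nonneg _) (fun k => hT_abs j k x) hgeo
    have h1 : |u j x| ≤ ∑' k : ℕ, |T j k x| := by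
      rw [hu]
      simp only [abs_neg]
      simpa [Real.norm_eq_abs] using norm_tsum_le_tsum_norm (f := fun k : ℕ => T j k x)
        (by simpa [Real.norm_eq_abs] using habs)
    have h2 : ∑' k : ℕ, |T j k x| ≤ ∑' k : ℕ, V * a ^ (k+1) :=
      Summable.tsum_le_tsum (fun k => hT_abs j k x) habs hgeo
    rw [htsum_geo] at h2
    linarith [h1.trans h2]
  · -- variation of u
    intro j x y
    set Ωv : ℝ := ⨆ n : ℤ, a ^ n.natAbs * ω (dist (x (j+n)) (y (j+n))) with hΩv
    set Tz : ℝ := ⨆ n : ℤ, s ^ n.natAbs * ω (dist (x (j+n)) (y (j+n))) ^ ((1:ℝ)/3) with hTz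
    have hΩvnn : 0 ≤ Ωv := hΩZ_nn j x y
    have hTznn : 0 ≤ Tz := by
      have h0 : (0:ℝ) ≤ s ^ (0:ℤ).natAbs * ω (dist (x (j+0)) (y (j+0))) ^ ((1:ℝ)/3) :=
        mul_nonneg (pow_nonneg hs0.le _) (Real.rpow_nonneg (hω_nn _) _)
      exact h0.trans (le_ciSup (hBddTz j x y) 0)
    -- Ωv ≤ Tz ^ 3, hence Ωv^{1/3} ≤ Tz
    have hΩT : Ωv ^ ((1:ℝ)/3) ≤ Tz := by
      have hcube : Ωv ≤ Tz ^ (3:ℕ) := by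
        refine ciSup_le fun n => ?_
        have h1 : s ^ n.natAbs * ω (dist (x (j+n)) (y (j+n))) ^ ((1:ℝ)/3) ≤ Tz :=
          le_ciSup (hBddTz j x y) n
        have h2 : (0:ℝ) ≤ s ^ n.natAbs * ω (dist (x (j+n)) (y (j+n))) ^ ((1:ℝ)/3) :=
          mul_nonneg (pow_nonneg hs0.le _) (Real.rpow_nonneg (hω_nn _) _)
        calc a ^ n.natAbs * ω (dist (x (j+n)) (y (j+n)))
            = (s ^ n.natAbs * ω (dist (x (j+n)) (y (j+n))) ^ ((1:ℝ)/3)) ^ (3:ℕ) := by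
              rw [mul_pow, hsY, sinai_cube_rpow _ (hω_nn _)]
          _ ≤ Tz ^ (3:ℕ) := pow_le_pow_left₀ h2 h1 3
      have h3 : Ωv ^ ((1:ℝ)/3) ≤ (Tz ^ (3:ℕ)) ^ ((1:ℝ)/3) :=
        Real.rpow_le_rpow hΩvnn hcube (by norm_num)
      have h4 : (Tz ^ (3:ℕ)) ^ ((1:ℝ)/3) = Tz := by
        rw [← Real.rpow_natCast Tz 3, ← Real.rpow_mul hTznn]; norm_num
      rwa [h4] at h3
    -- per-term bound
    have hterm : ∀ k : ℕ, |T j k x - T j k y| ≤ 2 * V * (Ωv ^ ((1:ℝ)/3) * s ^ k) := by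
      intro k
      have e1 := lemZ j k x y x y (fun m => Or.inr ⟨rfl, rfl⟩)
      have e2 := lemZ j k x y (R j x) (R j y) (fun m => by
        by_cases h : j ≤ m
        · exact Or.inr ⟨hR_ge j x m h, hR_ge j y m h⟩
        · exact Or.inl (by rw [hR_lt j x m h, hR_lt j y m h]))
      have b1 : |T j k x - T j k y| ≤ 2 * V * ((a ^ k)⁻¹ * Ωv) := by
        have hsplit : T j k x - T j k y =
            (f (j + k) x - f (j + k) y) + -(f (j + k) (R j x) - f (j + k) (R j y)) := by
          simp only [hT]; ring
        rw [hsplit]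
        refine (abs_add_le _ _).trans ?_
        rw [abs_neg]
        rw [hΩv]
        linarith [e1, e2]
      have b2 : |T j k x - T j k y| ≤ 2 * V * a ^ k := by
        have t1 := hT_abs j k x
        have t2 := hT_abs j k y
        have h3 : V * a ^ (k+1) ≤ V * a ^ k := by
          refine mul_le_mul_of_nonneg_left ?_ hV
          exact pow_le_pow_of_le_one ha0.le ha1.le (by omega)
        calc |T j k x - T j k y| ≤ |T j k x| + |T j k y| := abs_sub _ _
          _ ≤ 2 * V * a ^ k := by linarith
      have hmin : min ((a ^ k)⁻¹ * Ωv) (a ^ k) ≤ Ωv ^ ((1:ℝ)/3) * s ^ k := by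
        have := sinai_min_le (Ωv ^ ((1:ℝ)/3)) (s ^ k) (Real.rpow_nonneg hΩvnn _) (pow_pos hs0 k)
        rwa [hsY, sinai_cube_rpow _ hΩvnn] at this
      rcases min_cases ((a ^ k)⁻¹ * Ωv) (a ^ k) with ⟨hmeq, _⟩ | ⟨hmeq, _⟩
      · refine b1.trans ?_
        refine mul_le_mul_of_nonneg_left ?_ (by linarith : (0:ℝ) ≤ 2 * V)
        rw [hmeq] at hmin
        exact hmin
      · refine b2.trans ?_
        refine mul_le_mul_of_nonneg_left ?_ (by linarith : (0:ℝ) ≤ 2 * V)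
        rw [hmeq] at hmin
        exact hmin
    -- sum up
    have hΔsum : Summable (fun k : ℕ => T j k x - T j k y) := (hT_sum j x).sub (hT_sum j y)
    have hΔabs : Summable (fun k : ℕ => |T j k x - T j k y|) := by
      refine Summable.of_nonneg_of_le (fun k => abs_nonneg _) hterm ?_
      have := (summable_geometric_of_lt_one hs0.le hs1).mul_left (2 * V * Ωv ^ ((1:ℝ)/3))
      refine this.congr fun k => by ring
    have hbsum : Summable (fun k : ℕ => 2 * V * (Ωv ^ ((1:ℝ)/3) * s ^ k)) := by
      have := (summable_geometric_of_lt_one hs0.le hs1).mul_left (2 * V * Ωv ^ ((1:ℝ)/3))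
      refine this.congr fun k => by ring
    have h1 : |u j x - u j y| = |∑' k : ℕ, (T j k x - T j k y)| := by
      rw [hu]
      rw [Summable.tsum_sub (hT_sum j x) (hT_sum j y)]
      rw [show -∑' k : ℕ, T j k x - -∑' k : ℕ, T j k y
        = -((∑' k : ℕ, T j k x) - ∑' k : ℕ, T j k y) by ring, abs_neg]
    have h2 : |∑' k : ℕ, (T j k x - T j k y)| ≤ ∑' k : ℕ, |T j k x - T j k y| := by
      simpa [Real.norm_eq_abs] using norm_tsum_le_tsum_norm
        (f := fun k : ℕ => T j k x - T j k y) (by simpa [Real.norm_eq_abs] using hΔabs)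
    have h3 : ∑' k : ℕ, |T j k x - T j k y| ≤ ∑' k : ℕ, 2 * V * (Ωv ^ ((1:ℝ)/3) * s ^ k) :=
      Summable.tsum_le_tsum hterm hΔabs hbsum
    have h4 : ∑' k : ℕ, 2 * V * (Ωv ^ ((1:ℝ)/3) * s ^ k)
        = (2 * V * Ωv ^ ((1:ℝ)/3)) * (1-s)⁻¹ := by
      calc ∑' k : ℕ, 2 * V * (Ωv ^ ((1:ℝ)/3) * s ^ k)
          = ∑' k : ℕ, (2 * V * Ωv ^ ((1:ℝ)/3)) * s ^ k := tsum_congr fun k => by ring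
        _ = (2 * V * Ωv ^ ((1:ℝ)/3)) * ∑' k : ℕ, s ^ k := tsum_mul_left
        _ = (2 * V * Ωv ^ ((1:ℝ)/3)) * (1-s)⁻¹ := by rw [tsum_geometric_of_lt_one hs0.le hs1]
    have h5 : (2 * V * Ωv ^ ((1:ℝ)/3)) * (1-s)⁻¹ ≤ D2 * Tz := by
      rw [hD2]
      have hΩ3nn : 0 ≤ Ωv ^ ((1:ℝ)/3) := Real.rpow_nonneg hΩvnn _
      have : 2 * V * Ωv ^ ((1:ℝ)/3) * (1-s)⁻¹ = (2 * V * (1-s)⁻¹) * Ωv ^ ((1:ℝ)/3) := by ring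
      rw [this]
      exact mul_le_mul_of_nonneg_left hΩT (mul_nonneg (by linarith) (inv_nonneg.mpr hs'.le))
    have h6 : D2 * Tz ≤ (V + D1 + D2) * Tz :=
      mul_le_mul_of_nonneg_right (by linarith) hTznn
    calc |u j x - u j y| = |∑' k : ℕ, (T j k x - T j k y)| := h1
      _ ≤ ∑' k : ℕ, |T j k x - T j k y| := h2
      _ ≤ ∑' k : ℕ, 2 * V * (Ωv ^ ((1:ℝ)/3) * s ^ k) := h3
      _ = (2 * V * Ωv ^ ((1:ℝ)/3)) * (1-s)⁻¹ := h4
      _ ≤ D2 * Tz := h5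
      _ ≤ (V + D1 + D2) * Tz := h6
  · -- bound on g
    intro j x
    have habs : Summable (fun k : ℕ => |G j k x|) :=
      Summable.of_nonneg_of_le (fun k => abs_nonneg _) (fun k => hG_abs j k x) hgeo
    have h1 : |∑' k : ℕ, G j k x| ≤ ∑' k : ℕ, |G j k x| := by
      simpa [Real.norm_eq_abs] using norm_tsum_le_tsum_norm
        (f := fun k : ℕ => G j k x) (by simpa [Real.norm_eq_abs] using habs)
    have h2 : ∑' k : ℕ, |G j k x| ≤ ∑' k : ℕ, V * a ^ (k+1) :=
      Summable.tsum_le_tsum (fun k => hG_abs j k x) habs hgeo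
    rw [htsum_geo] at h2
    rw [hgform j x]
    refine (abs_add_le _ _).trans ?_
    have := hbd j (R j x)
    linarith [h1.trans h2]
  · -- variation of g
    intro j x y
    set Ωp : ℝ := ⨆ n : ℕ, a ^ n * ω (dist (x (j+n)) (y (j+n))) with hΩp
    set Tn : ℝ := ⨆ n : ℕ, s ^ n * ω (dist (x (j+n)) (y (j+n))) ^ ((1:ℝ)/3) with hTn
    have hΩpnn : 0 ≤ Ωp := hΩN_nn j x y
    have hTnnn : 0 ≤ Tn := by
      have h0 : (0:ℝ) ≤ s ^ (0:ℕ) * ω (dist (x (j+(0:ℕ))) (y (j+(0:ℕ)))) ^ ((1:ℝ)/3) :=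
        mul_nonneg (pow_nonneg hs0.le _) (Real.rpow_nonneg (hω_nn _) _)
      exact h0.trans (le_ciSup (hBddTn j x y) 0)
    have hΩT : Ωp ^ ((1:ℝ)/3) ≤ Tn := by
      have hcube : Ωp ≤ Tn ^ (3:ℕ) := by
        refine ciSup_le fun n => ?_
        have h1 : s ^ n * ω (dist (x (j+n)) (y (j+n))) ^ ((1:ℝ)/3) ≤ Tn :=
          le_ciSup (hBddTn j x y) n
        have h2 : (0:ℝ) ≤ s ^ n * ω (dist (x (j+n)) (y (j+n))) ^ ((1:ℝ)/3) :=
          mul_nonneg (pow_nonneg hs0.le _) (Real.rpow_nonneg (hω_nn _) _)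
        calc a ^ n * ω (dist (x (j+n)) (y (j+n)))
            = (s ^ n * ω (dist (x (j+n)) (y (j+n))) ^ ((1:ℝ)/3)) ^ (3:ℕ) := by
              rw [mul_pow, hsY, sinai_cube_rpow _ (hω_nn _)]
          _ ≤ Tn ^ (3:ℕ) := pow_le_pow_left₀ h2 h1 3
      have h3 : Ωp ^ ((1:ℝ)/3) ≤ (Tn ^ (3:ℕ)) ^ ((1:ℝ)/3) :=
        Real.rpow_le_rpow hΩpnn hcube (by norm_num)
      have h4 : (Tn ^ (3:ℕ)) ^ ((1:ℝ)/3) = Tn := by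
        rw [← Real.rpow_natCast Tn 3, ← Real.rpow_mul hTnnn]; norm_num
      rwa [h4] at h3
    have hΩp1 : Ωp ≤ 1 := ciSup_le fun n => helem1 _ _
    have hΩp13 : Ωp ≤ Ωp ^ ((1:ℝ)/3) := by
      have hX : (Ωp ^ ((1:ℝ)/3)) ^ (3:ℕ) = Ωp := sinai_cube_rpow _ hΩpnn
      have hXnn : 0 ≤ Ωp ^ ((1:ℝ)/3) := Real.rpow_nonneg hΩpnn _
      have hX1 : Ωp ^ ((1:ℝ)/3) ≤ 1 := Real.rpow_le_one hΩpnn hΩp1 (by norm_num)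
      nlinarith [hX, hXnn, hX1,
        mul_nonneg (mul_nonneg hXnn hXnn) (sub_nonneg.mpr hX1),
        mul_nonneg hXnn (sub_nonneg.mpr hX1)]
    -- predicates for lemN
    have pred1 : ∀ m, R j x m = R j y m ∨ (j ≤ m ∧ R j x m = x m ∧ R j y m = y m) := by
      intro m
      by_cases h : j ≤ m
      · exact Or.inr ⟨h, hR_ge j x m h, hR_ge j y m h⟩
      · exact Or.inl (by rw [hR_lt j x m h, hR_lt j y m h])
    have pred2 : ∀ m, R (j+1) x m = R (j+1) y m ∨ (j ≤ m ∧ R (j+1) x m = x m ∧ R (j+1) y m = y m) := by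
      intro m
      by_cases h : j + 1 ≤ m
      · exact Or.inr ⟨by omega, hR_ge (j+1) x m h, hR_ge (j+1) y m h⟩
      · exact Or.inl (by rw [hR_lt (j+1) x m h, hR_lt (j+1) y m h])
    -- first term
    have hfirst : |f j (R j x) - f j (R j y)| ≤ V * Ωp := by
      have := lemN j 0 x y (R j x) (R j y) pred1
      simpa [hΩp] using this
    -- per-term bound for G
    have hterm : ∀ k : ℕ, |G j k x - G j k y| ≤ 2 * V * (Ωp ^ ((1:ℝ)/3) * s ^ k) := by
      intro k
      have hidx : j + (((k:ℕ)+1 : ℕ) : ℤ) = j + 1 + (k:ℤ) := by push_cast; ring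
      have e1 := lemN j (k+1) x y (R j x) (R j y) pred1
      have e2 := lemN j (k+1) x y (R (j+1) x) (R (j+1) y) pred2
      rw [hidx] at e1 e2
      have b1 : |G j k x - G j k y| ≤ 2 * V * ((a ^ (k+1))⁻¹ * Ωp) := by
        have hsplit : G j k x - G j k y =
            (f (j + 1 + k) (R j x) - f (j + 1 + k) (R j y))
            + -(f (j + 1 + k) (R (j+1) x) - f (j + 1 + k) (R (j+1) y)) := by
          simp only [hG]; ring
        rw [hsplit]
        refine (abs_add_le _ _).trans ?_
        rw [abs_neg, hΩp]
        linarith [e1, e2]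
      have b2 : |G j k x - G j k y| ≤ 2 * V * a ^ (k+1) := by
        have t1 := hG_abs j k x
        have t2 := hG_abs j k y
        calc |G j k x - G j k y| ≤ |G j k x| + |G j k y| := abs_sub _ _
          _ ≤ 2 * V * a ^ (k+1) := by linarith
      have hmin : min ((a ^ (k+1))⁻¹ * Ωp) (a ^ (k+1)) ≤ Ωp ^ ((1:ℝ)/3) * s ^ k := by
        have h0 := sinai_min_le (Ωp ^ ((1:ℝ)/3)) (s ^ (k+1)) (Real.rpow_nonneg hΩpnn _) (pow_pos hs0 (k+1))
        rw [hsY, sinai_cube_rpow _ hΩpnn] at h0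
        refine h0.trans ?_
        refine mul_le_mul_of_nonneg_left ?_ (Real.rpow_nonneg hΩpnn _)
        exact pow_le_pow_of_le_one hs0.le hs1.le (by omega)
      rcases min_cases ((a ^ (k+1))⁻¹ * Ωp) (a ^ (k+1)) with ⟨hmeq, _⟩ | ⟨hmeq, _⟩
      · refine b1.trans ?_
        refine mul_le_mul_of_nonneg_left ?_ (by linarith : (0:ℝ) ≤ 2 * V)
        rw [hmeq] at hmin
        exact hmin
      · refine b2.trans ?_
        refine mul_le_mul_of_nonneg_left ?_ (by linarith : (0:ℝ) ≤ 2 * V)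
        rw [hmeq] at hmin
        exact hmin
    -- sum up
    have hΔsum : Summable (fun k : ℕ => G j k x - G j k y) := (hG_sum j x).sub (hG_sum j y)
    have hbsum : Summable (fun k : ℕ => 2 * V * (Ωp ^ ((1:ℝ)/3) * s ^ k)) := by
      have := (summable_geometric_of_lt_one hs0.le hs1).mul_left (2 * V * Ωp ^ ((1:ℝ)/3))
      refine this.congr fun k => by ring
    have hΔabs : Summable (fun k : ℕ => |G j k x - G j k y|) :=
      Summable.of_nonneg_of_le (fun k => abs_nonneg _) hterm hbsum
    have h1 : g j x - g j y = (f j (R j x) - f j (R j y)) + ∑' k : ℕ, (G j k x - G j k y) := by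
      rw [hgform j x, hgform j y, Summable.tsum_sub (hG_sum j x) (hG_sum j y)]
      ring
    have h2 : |∑' k : ℕ, (G j k x - G j k y)| ≤ ∑' k : ℕ, |G j k x - G j k y| := by
      simpa [Real.norm_eq_abs] using norm_tsum_le_tsum_norm
        (f := fun k : ℕ => G j k x - G j k y) (by simpa [Real.norm_eq_abs] using hΔabs)
    have h3 : ∑' k : ℕ, |G j k x - G j k y| ≤ ∑' k : ℕ, 2 * V * (Ωp ^ ((1:ℝ)/3) * s ^ k) :=
      Summable.tsum_le_tsum hterm hΔabs hbsum
    have h4 : ∑' k : ℕ, 2 * V * (Ωp ^ ((1:ℝ)/3) * s ^ k)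
        = (2 * V * Ωp ^ ((1:ℝ)/3)) * (1-s)⁻¹ := by
      calc ∑' k : ℕ, 2 * V * (Ωp ^ ((1:ℝ)/3) * s ^ k)
          = ∑' k : ℕ, (2 * V * Ωp ^ ((1:ℝ)/3)) * s ^ k := tsum_congr fun k => by ring
        _ = (2 * V * Ωp ^ ((1:ℝ)/3)) * ∑' k : ℕ, s ^ k := tsum_mul_left
        _ = (2 * V * Ωp ^ ((1:ℝ)/3)) * (1-s)⁻¹ := by rw [tsum_geometric_of_lt_one hs0.le hs1]
    have h5 : V * Ωp ≤ V * Ωp ^ ((1:ℝ)/3) := mul_le_mul_of_nonneg_left hΩp13 hV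
    have hΩ3nn : 0 ≤ Ωp ^ ((1:ℝ)/3) := Real.rpow_nonneg hΩpnn _
    have h6 : (V + D2) * Ωp ^ ((1:ℝ)/3) ≤ (V + D1 + D2) * Tn := by
      have : (V + D2) * Ωp ^ ((1:ℝ)/3) ≤ (V + D2) * Tn :=
        mul_le_mul_of_nonneg_left hΩT (by linarith)
      refine this.trans (mul_le_mul_of_nonneg_right (by linarith) hTnnn)
    calc |g j x - g j y| = |(f j (R j x) - f j (R j y)) + ∑' k : ℕ, (G j k x - G j k y)| := by
          rw [h1]
      _ ≤ |f j (R j x) - f j (R j y)| + |∑' k : ℕ, (G j k x - G j k y)| := abs_add_le _ _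
      _ ≤ V * Ωp + (2 * V * Ωp ^ ((1:ℝ)/3)) * (1-s)⁻¹ := by
          have := h2.trans h3
          rw [h4] at this
          linarith [hfirst]
      _ ≤ (V + D2) * Ωp ^ ((1:ℝ)/3) := by
          rw [hD2]; linarith [h5]
      _ ≤ (V + D1 + D2) * Tn := h6
  · -- g depends only on coordinates ≥ j
    intro j x y hxy
    have e1 : R j x = R j y := by
      funext m
      by_cases h : j ≤ m
      · rw [hR_ge j x m h, hR_ge j y m h, hxy m h]
      · rw [hR_lt j x m h, hR_lt j y m h]
    have e2 : R (j+1) x = R (j+1) y := by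
      funext m
      by_cases h : j + 1 ≤ m
      · rw [hR_ge (j+1) x m h, hR_ge (j+1) y m h, hxy m (by omega)]
      · rw [hR_lt (j+1) x m h, hR_lt (j+1) y m h]
    rw [hgform j x, hgform j y]
    simp only [hG, e1, e2]
  · -- cocycle equation
    intro j x
    simp only [hg]
    ring
end

section
/- Let ν be a probability measure on M, r : M → [1−a, 1] measurable, and q : M → ℝ measurable. Suppose |∫_M r(x)e^{iq(x)} dν(x)| ≥ 1 − ε with 0 ≤ ε ≤ 1 and 0 ≤ a < 1. Then ∫∫_{M×M} sin²((q(x₁)−q(x₂))/2) dν(x₁)dν(x₂) ≤ (3ε/2)(1−a)^{-2}, provided ε ≤ 1 (using 2ε + ε² ≤ 3ε). -/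
open MeasureTheory

/-- If `r` takes values in `[1−a,1]` and `|∫ r e^{iq} dν| ≥ 1 − ε` with `0 ≤ ε ≤ 1`, then
`∫∫ sin²((q(x₁)−q(x₂))/2) dν dν ≤ (3ε/2)(1−a)^{-2}`. -/
theorem stmt_14 {M : Type*} [MeasurableSpace M] (ν : Measure M) [IsProbabilityMeasure ν]
    (r q : M → ℝ) (hr : Measurable r) (hq : Measurable q)
    (a ε : ℝ) (ha0 : 0 ≤ a) (ha1 : a < 1) (hε0 : 0 ≤ ε) (hε1 : ε ≤ 1)
    (hrbd : ∀ x, 1 - a ≤ r x ∧ r x ≤ 1)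
    (hint : 1 - ε ≤ ‖∫ x, (r x : ℂ) * Complex.exp (Complex.I * (q x : ℂ)) ∂ν‖) :
    (∫ x₁, ∫ x₂, Real.sin ((q x₁ - q x₂) / 2) ^ 2 ∂ν ∂ν) ≤
      (3 * ε / 2) / (1 - a) ^ 2 := by
  have hapos : 0 < 1 - a := by linarith
  set c : ℝ := (1 - a) ^ 2 with hc
  have hcpos : 0 < c := by positivity
  -- basic bounds on r
  have hr0 : ∀ x, 0 ≤ r x := fun x => le_trans hapos.le (hrbd x).1
  have hrabs : ∀ x, |r x| ≤ 1 := fun x => abs_le.2 ⟨by linarith [(hrbd x).1, hr0 x], (hrbd x).2⟩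
  -- sine identity
  have hsin : ∀ θ : ℝ, Real.cos θ = 1 - 2 * Real.sin (θ / 2) ^ 2 := by
    intro θ
    have h1 := Real.sin_sq (θ / 2)
    have h2 := Real.cos_sq (θ / 2)
    have h3 : 2 * (θ / 2) = θ := by ring
    rw [h3] at h2
    rw [h1, h2]; ring
  -- integrability helper
  have key : ∀ (g : M → ℝ), Measurable g → (∀ x, |g x| ≤ 1) → Integrable g ν := by
    intro g hg hb
    exact (integrable_const (1 : ℝ)).mono' hg.aestronglyMeasurable
      (Filter.Eventually.of_forall fun x => by simpa using hb x)
  -- the complex function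
  set f : M → ℂ := fun x => (r x : ℂ) * Complex.exp (Complex.I * (q x : ℂ)) with hf
  have hfm : Measurable f := by
    apply (Complex.measurable_ofReal.comp hr).mul
    exact Complex.measurable_exp.comp ((Complex.measurable_ofReal.comp hq).const_mul _)
  have hfnorm : ∀ x, ‖f x‖ ≤ 1 := by
    intro x
    have : Complex.I * (q x : ℂ) = (q x : ℂ) * Complex.I := mul_comm _ _
    simp only [hf, norm_mul, this]
    rw [Complex.norm_exp_ofReal_mul_I]
    simpa using hrabs x
  have hfint : Integrable f ν :=
    (integrable_const (1 : ℝ)).mono' hfm.aestronglyMeasurable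
      (Filter.Eventually.of_forall hfnorm)
  -- real and imaginary parts of f
  have hre : ∀ x, (f x).re = r x * Real.cos (q x) := by
    intro x
    simp [hf, Complex.exp_re, Complex.exp_im, Complex.mul_re, Complex.mul_im]
  have him : ∀ x, (f x).im = r x * Real.sin (q x) := by
    intro x
    simp [hf, Complex.exp_re, Complex.exp_im, Complex.mul_re, Complex.mul_im]
  set A : ℝ := ∫ x, r x * Real.cos (q x) ∂ν with hA
  set B : ℝ := ∫ x, r x * Real.sin (q x) ∂ν with hB
  have hAre : (∫ x, f x ∂ν).re = A := by
    have h := integral_re (μ := ν) hfint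
    simp only [RCLike.re_to_complex] at h
    rw [← h, hA]
    exact integral_congr_ae (Filter.Eventually.of_forall fun x => hre x)
  have hBim : (∫ x, f x ∂ν).im = B := by
    have h := integral_im (μ := ν) hfint
    simp only [RCLike.im_to_complex] at h
    rw [← h, hB]
    exact integral_congr_ae (Filter.Eventually.of_forall fun x => him x)
  -- bounds on norm squared
  have hnormsq : ‖∫ x, f x ∂ν‖ ^ 2 = A ^ 2 + B ^ 2 := by
    rw [Complex.sq_norm, Complex.normSq_apply, hAre, hBim]
    ring
  -- integrability of various real functions
  have hcosm : Measurable fun x => r x * Real.cos (q x) := hr.mul (Real.measurable_cos.comp hq)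
  have hsinm : Measurable fun x => r x * Real.sin (q x) := hr.mul (Real.measurable_sin.comp hq)
  have hcosb : ∀ x, |r x * Real.cos (q x)| ≤ 1 := by
    intro x; rw [abs_mul]
    calc |r x| * |Real.cos (q x)| ≤ 1 * 1 :=
          mul_le_mul (hrabs x) (Real.abs_cos_le_one _) (abs_nonneg _) zero_le_one
      _ = 1 := mul_one 1
  have hsinb : ∀ x, |r x * Real.sin (q x)| ≤ 1 := by
    intro x; rw [abs_mul]
    calc |r x| * |Real.sin (q x)| ≤ 1 * 1 :=
          mul_le_mul (hrabs x) (Real.abs_sin_le_one _) (abs_nonneg _) zero_le_one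
      _ = 1 := mul_one 1
  -- T : outer function of the double sine integral
  set T : M → ℝ := fun x₁ => ∫ x₂, Real.sin ((q x₁ - q x₂) / 2) ^ 2 ∂ν with hT
  have hTprodm : StronglyMeasurable fun p : M × M => Real.sin ((q p.1 - q p.2) / 2) ^ 2 := by
    apply Measurable.stronglyMeasurable
    exact ((Real.measurable_sin.comp (((hq.comp measurable_fst).sub
      (hq.comp measurable_snd)).div_const 2)).pow_const 2)
  have hTm : StronglyMeasurable T := hTprodm.integral_prod_right'
  have hsinsqb : ∀ x₁ x₂ : M, |Real.sin ((q x₁ - q x₂) / 2) ^ 2| ≤ 1 := by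
    intro x₁ x₂
    rw [abs_of_nonneg (sq_nonneg _)]
    exact Real.sin_sq_le_one _
  have hTb : ∀ x₁, |T x₁| ≤ 1 := by
    intro x₁
    have h1 : T x₁ ≤ 1 := by
      calc T x₁ ≤ ∫ _x₂, (1 : ℝ) ∂ν := by
            apply integral_mono
              (key _ (((Real.measurable_sin.comp ((hq.const_sub _).div_const 2)).pow_const 2))
               (fun x₂ => hsinsqb x₁ x₂)) (integrable_const 1)
            intro x₂
            simpa using (abs_le.1 (hsinsqb x₁ x₂)).2
        _ = 1 := by simp
    have h0 : 0 ≤ T x₁ := integral_nonneg fun x₂ => sq_nonneg _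
    rw [abs_of_nonneg h0]; exact h1
  have hTint : Integrable T ν :=
    (integrable_const (1 : ℝ)).mono' hTm.aestronglyMeasurable
      (Filter.Eventually.of_forall fun x => by simpa using hTb x)
  -- inner integrand integrability (fixed x₁)
  have hinner1 : ∀ x₁, Integrable (fun x₂ =>
      r x₁ * Real.cos (q x₁) * (r x₂ * Real.cos (q x₂)) +
      r x₁ * Real.sin (q x₁) * (r x₂ * Real.sin (q x₂))) ν := by
    intro x₁
    exact ((key _ hcosm hcosb).const_mul _).add ((key _ hsinm hsinb).const_mul _)
  -- A² + B² = ∫ G with G x₁ = ∫ x₂, r₁ r₂ cos (q₁ − q₂)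
  have hsq : A ^ 2 + B ^ 2 = ∫ x₁, ∫ x₂,
      (r x₁ * r x₂ * Real.cos (q x₁ - q x₂)) ∂ν ∂ν := by
    have e1 : A ^ 2 + B ^ 2 = ∫ x₁, (r x₁ * Real.cos (q x₁) * A +
        r x₁ * Real.sin (q x₁) * B) ∂ν := by
      rw [integral_add (((key _ hcosm hcosb).mul_const A)) (((key _ hsinm hsinb).mul_const B)),
        integral_mul_const, integral_mul_const, ← hA, ← hB]
      ring
    rw [e1]
    apply integral_congr_ae
    apply Filter.Eventually.of_forall
    intro x₁
    have e2 : r x₁ * Real.cos (q x₁) * A = ∫ x₂, r x₁ * Real.cos (q x₁) *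
        (r x₂ * Real.cos (q x₂)) ∂ν := (integral_const_mul _ _).symm
    have e3 : r x₁ * Real.sin (q x₁) * B = ∫ x₂, r x₁ * Real.sin (q x₁) *
        (r x₂ * Real.sin (q x₂)) ∂ν := (integral_const_mul _ _).symm
    show r x₁ * Real.cos (q x₁) * A + r x₁ * Real.sin (q x₁) * B =
      ∫ x₂, r x₁ * r x₂ * Real.cos (q x₁ - q x₂) ∂ν
    rw [e2, e3, ← integral_add (((key _ hcosm hcosb).const_mul _))
      (((key _ hsinm hsinb).const_mul _))]
    apply integral_congr_ae
    apply Filter.Eventually.of_forall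
    intro x₂
    simp only [Real.cos_sub]
    ring
  -- pointwise bound
  have hpt : ∀ x₁ x₂ : M, r x₁ * r x₂ * Real.cos (q x₁ - q x₂) ≤
      1 - 2 * c * Real.sin ((q x₁ - q x₂) / 2) ^ 2 := by
    intro x₁ x₂
    have hs := hsin (q x₁ - q x₂)
    set s := Real.sin ((q x₁ - q x₂) / 2) ^ 2
    have hs0 : 0 ≤ s := sq_nonneg _
    have hs1 : s ≤ 1 := Real.sin_sq_le_one _
    have hrr1 : r x₁ * r x₂ ≤ 1 := by
      calc r x₁ * r x₂ ≤ 1 * 1 := mul_le_mul (hrbd x₁).2 (hrbd x₂).2 (hr0 x₂) zero_le_one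
        _ = 1 := mul_one 1
    have hrrc : c ≤ r x₁ * r x₂ := by
      rw [hc, sq]
      exact mul_le_mul (hrbd x₁).1 (hrbd x₂).1 hapos.le (hr0 x₁)
    rw [hs]
    nlinarith
  -- integrability of inner cos integrand
  have hinnercos : ∀ x₁, Integrable (fun x₂ => r x₁ * r x₂ * Real.cos (q x₁ - q x₂)) ν := by
    intro x₁
    apply key
    · exact ((hr.const_mul (r x₁)).mul (Real.measurable_cos.comp (measurable_const.sub hq)))
    · intro x₂
      rw [abs_mul, abs_mul]
      calc |r x₁| * |r x₂| * |Real.cos (q x₁ - q x₂)| ≤ 1 * 1 * 1 :=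
            mul_le_mul (mul_le_mul (hrabs x₁) (hrabs x₂) (abs_nonneg _) zero_le_one)
              (Real.abs_cos_le_one _) (abs_nonneg _) (by norm_num)
        _ = 1 := by ring
  have hinnersin : ∀ x₁, Integrable (fun x₂ => Real.sin ((q x₁ - q x₂) / 2) ^ 2) ν := by
    intro x₁
    apply key
    · exact (Real.measurable_sin.comp ((measurable_const.sub hq).div_const 2)).pow_const 2
    · exact fun x₂ => hsinsqb x₁ x₂
  -- compare double integrals
  have hcomp : (∫ x₁, ∫ x₂, (r x₁ * r x₂ * Real.cos (q x₁ - q x₂)) ∂ν ∂ν) ≤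
      ∫ x₁, (1 - 2 * c * T x₁) ∂ν := by
    apply integral_mono ?_ ?_ ?_
    · -- integrability of outer LHS: it equals a nice function
      apply (((key _ hcosm hcosb).mul_const A).add ((key _ hsinm hsinb).mul_const B)).congr
      apply Filter.Eventually.of_forall
      intro x₁
      have e2 : r x₁ * Real.cos (q x₁) * A = ∫ x₂, r x₁ * Real.cos (q x₁) *
          (r x₂ * Real.cos (q x₂)) ∂ν := (integral_const_mul _ _).symm
      have e3 : r x₁ * Real.sin (q x₁) * B = ∫ x₂, r x₁ * Real.sin (q x₁) *
          (r x₂ * Real.sin (q x₂)) ∂ν := (integral_const_mul _ _).symm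
      show r x₁ * Real.cos (q x₁) * A + r x₁ * Real.sin (q x₁) * B = _
      rw [e2, e3, ← integral_add (((key _ hcosm hcosb).const_mul _))
        (((key _ hsinm hsinb).const_mul _))]
      apply integral_congr_ae
      apply Filter.Eventually.of_forall
      intro x₂
      simp only [Real.cos_sub]
      ring
    · exact (integrable_const 1).sub (hTint.const_mul _)
    · intro x₁
      show (∫ x₂, (r x₁ * r x₂ * Real.cos (q x₁ - q x₂)) ∂ν) ≤ 1 - 2 * c * T x₁
      have : (1 : ℝ) - 2 * c * T x₁ = ∫ x₂, (1 - 2 * c * Real.sin ((q x₁ - q x₂) / 2) ^ 2) ∂ν := by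
        rw [integral_sub (integrable_const 1) ((hinnersin x₁).const_mul _),
          integral_const_mul, integral_const]
        simp [hT]
      rw [this]
      exact integral_mono (hinnercos x₁) ((integrable_const 1).sub
        ((hinnersin x₁).const_mul _)) (fun x₂ => hpt x₁ x₂)
  have hRHS : (∫ x₁, (1 - 2 * c * T x₁) ∂ν) = 1 - 2 * c * ∫ x₁, T x₁ ∂ν := by
    rw [integral_sub (integrable_const 1) (hTint.const_mul _), integral_const_mul,
      integral_const]
    simp
  -- put everything together
  have hε' : 0 ≤ 1 - ε := by linarith
  have hZ : (1 - ε) ^ 2 ≤ ‖∫ x, f x ∂ν‖ ^ 2 := by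
    apply pow_le_pow_left₀ hε' _ 2
    exact hint
  rw [hnormsq, hsq] at hZ
  have hS : 2 * c * (∫ x₁, T x₁ ∂ν) ≤ 2 * ε - ε ^ 2 := by
    have := hcomp.trans_eq hRHS
    nlinarith
  have hgoal : (∫ x₁, T x₁ ∂ν) ≤ (3 * ε / 2) / c := by
    rw [le_div_iff₀ hcpos]
    nlinarith
  exact hgoal
end

section
/- Under the contraction assumption ‖P_j(·|x) − P_j(·|y)‖_{TV} ≤ δ ω(d_{j+1}(x,y)) with δ ∈ (0,1), and the ball-mass assumption (existence of n₀ and ζ(r) > 0 with P_{j,n₀}(B̃_{j,n₀}(b,r)|x) ≥ ζ(r) for all j, b, x and small r), the following holds: for every small r > 0, inf_{j,x} κ_j({y ∈ 𝒳_{j,∞} : sup_{n≥0} aⁿ ω(d_{j+n}(x_{j+n}, y_{j+n})) ≤ r}) ≥ ζ(r)^{⌊n_r/n₀⌋ + 1} > 0, where n_r ≥ n₀ is the least integer with a^{n_r} < r and κ_j is the law of (X_j, X_{j+1}, …). -/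
open MeasureTheory ProbabilityTheory

/-- Under the Dobrushin-type contraction assumption on the backward transition kernels and the
ball-mass assumption (the conditional probability, given the future, that a block
`(X_j,…,X_{j+n₀-1})` lies in the `ω`-ball of radius `r` around any point `b` is at least
`ζ(r) > 0`), the law `κ_j` of `(X_j,X_{j+1},…)` gives mass at least `ζ(r)^{⌊n_r/n₀⌋+1}` to
every graded ball `{y : sup_n aⁿ ω(d_{j+n}(x_{j+n},y_{j+n})) ≤ r}`, where `n_r ≥ n₀` is the
least integer with `a^{n_r} < r`. -/
theorem stmt_15 {Ω : Type*} [m0 : MeasurableSpace Ω] (μ : Measure Ω) [IsProbabilityMeasure μ]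
    (𝒳 : ℕ → Type*) [∀ k, MetricSpace (𝒳 k)] [∀ k, MeasurableSpace (𝒳 k)]
    [∀ k, BorelSpace (𝒳 k)]
    (hdiam : ∀ k (x y : 𝒳 k), dist x y ≤ 1)
    (X : ∀ j, Ω → 𝒳 j) (hX : ∀ j, Measurable (X j))
    (ω : ℝ → ℝ) (hωmeas : Measurable ω) (hω0 : ω 0 = 0) (hω01 : ∀ u, 0 ≤ ω u ∧ ω u ≤ 1)
    (a : ℝ) (ha : a ∈ Set.Ioo (0 : ℝ) 1)
    -- the contraction assumption on the backward transition kernels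
    (κ : ∀ j, Kernel (𝒳 (j + 1)) (𝒳 j)) (hκ : ∀ j, IsMarkovKernel (κ j))
    (hker : ∀ j : ℕ, ∀ g : 𝒳 j → ℝ, Measurable g → (∀ x, |g x| ≤ 1) →
      μ[(fun ϖ => g (X j ϖ)) | MeasurableSpace.comap (X (j + 1)) inferInstance]
        =ᵐ[μ] fun ϖ => ∫ y, g y ∂(κ j (X (j + 1) ϖ)))
    (δ : ℝ) (hδ : δ ∈ Set.Ioo (0 : ℝ) 1)
    (hcontr : ∀ (j : ℕ) (x y : 𝒳 (j + 1)), tvDist (κ j x) (κ j y) ≤ δ * ω (dist x y))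
    -- the ball-mass assumption, conditionally on the future
    (n₀ : ℕ) (hn₀ : 0 < n₀) (ζ : ℝ → ℝ) (r₀ : ℝ) (hr₀ : 0 < r₀)
    (hball : ∀ r, 0 < r → r ≤ r₀ → 0 < ζ r ∧
      ∀ (j : ℕ) (b : ∀ k, 𝒳 k),
        ∀ᵐ ϖ ∂μ, ζ r ≤
          (μ[Set.indicator {ϖ' | ∀ k ∈ Finset.Ico j (j + n₀), ω (dist (X k ϖ') (b k)) ≤ r}
              (fun _ => (1 : ℝ)) |
            ⨆ s : ℕ, MeasurableSpace.comap (X (j + n₀ + s)) inferInstance]) ϖ) :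
    ∀ r, 0 < r → r ≤ r₀ → ∀ n_r : ℕ, n₀ ≤ n_r → a ^ n_r < r →
      (∀ m : ℕ, n₀ ≤ m → a ^ m < r → n_r ≤ m) →
      ∀ (j : ℕ) (x : ∀ k, 𝒳 k),
        ζ r ^ (n_r / n₀ + 1) ≤
          (μ {ϖ | ∀ n : ℕ, a ^ n * ω (dist (X (j + n) ϖ) (x (j + n))) ≤ r}).toReal := by
  intro r hr hrr₀ n_r hn₀r hanr hleast j₀ x
  have hζpos := (hball r hr hrr₀).1
  -- basic sets
  set S : ℕ → Set Ω := fun k => {ϖ | ω (dist (X k ϖ) (x k)) ≤ r} with hSdef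
  have hTmeas : ∀ k, MeasurableSet {z : 𝒳 k | ω (dist z (x k)) ≤ r} := fun k =>
    measurableSet_le (hωmeas.comp (continuous_id.dist continuous_const).measurable)
      measurable_const
  have hSmeas : ∀ k, MeasurableSet (S k) := fun k => (hX k) (hTmeas k)
  have hScomap : ∀ k, MeasurableSet[MeasurableSpace.comap (X k) inferInstance] (S k) :=
    fun k => ⟨_, hTmeas k, rfl⟩
  -- key one-block estimate
  have key : ∀ (j : ℕ) (C : Set Ω),
      MeasurableSet[⨆ s : ℕ, MeasurableSpace.comap (X (j + n₀ + s)) inferInstance] C →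
      ζ r * (μ C).toReal ≤ (μ ((⋂ k ∈ Finset.Ico j (j + n₀), S k) ∩ C)).toReal := by
    intro j C hC
    have h𝔉 : (⨆ s : ℕ, MeasurableSpace.comap (X (j + n₀ + s)) inferInstance) ≤ m0 :=
      iSup_le fun s => (hX _).comap_le
    have hC0 : MeasurableSet C := h𝔉 _ hC
    have hB : MeasurableSet (⋂ k ∈ Finset.Ico j (j + n₀), S k) :=
      Finset.measurableSet_biInter _ fun k _ => hSmeas k
    have hBeq : {ϖ' | ∀ k ∈ Finset.Ico j (j + n₀), ω (dist (X k ϖ') (x k)) ≤ r}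
        = ⋂ k ∈ Finset.Ico j (j + n₀), S k := by
      ext ϖ; simp [hSdef]
    have hfint : Integrable
        (Set.indicator (⋂ k ∈ Finset.Ico j (j + n₀), S k) (fun _ => (1 : ℝ))) μ :=
      (integrable_const (1 : ℝ)).indicator hB
    have hbound := (hball r hr hrr₀).2 j x
    rw [hBeq] at hbound
    have h1 : ζ r * (μ C).toReal ≤
        ∫ ϖ in C, (μ[Set.indicator (⋂ k ∈ Finset.Ico j (j + n₀), S k) (fun _ => (1 : ℝ)) |
          ⨆ s : ℕ, MeasurableSpace.comap (X (j + n₀ + s)) inferInstance]) ϖ ∂μ := by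
      have hc : ∫ _ in C, ζ r ∂μ = (μ C).toReal * ζ r := by
        rw [setIntegral_const]; rfl
      rw [mul_comm, ← hc]
      exact integral_mono_ae (integrableOn_const (measure_ne_top μ C))
        integrable_condExp.integrableOn (ae_restrict_of_ae hbound)
    have h2 := setIntegral_condExp h𝔉 hfint hC
    rw [h2] at h1
    have h3 : ∫ ϖ in C, Set.indicator (⋂ k ∈ Finset.Ico j (j + n₀), S k)
        (fun _ => (1 : ℝ)) ϖ ∂μ
        = (μ ((⋂ k ∈ Finset.Ico j (j + n₀), S k) ∩ C)).toReal := by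
      rw [setIntegral_indicator hB, setIntegral_const, smul_eq_mul, mul_one, Set.inter_comm]; rfl
    rw [h3] at h1
    exact h1
  -- the block induction
  have main : ∀ (m j : ℕ), ζ r ^ m ≤ (μ (⋂ k ∈ Finset.Ico j (j + m * n₀), S k)).toReal := by
    intro m
    induction m with
    | zero => intro j; simp
    | succ m ih =>
      intro j
      have hmn : j + (m + 1) * n₀ = j + n₀ + m * n₀ := by ring
      have hsplit : (⋂ k ∈ Finset.Ico j (j + (m + 1) * n₀), S k)
          = (⋂ k ∈ Finset.Ico j (j + n₀), S k)
            ∩ ⋂ k ∈ Finset.Ico (j + n₀) (j + n₀ + m * n₀), S k := by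
        rw [hmn]
        ext ϖ
        simp only [Set.mem_iInter, Set.mem_inter_iff, Finset.mem_Ico]
        constructor
        · intro h
          exact ⟨fun k hk => h k ⟨hk.1, by omega⟩, fun k hk => h k ⟨by omega, hk.2⟩⟩
        · intro h k hk
          by_cases hk' : k < j + n₀
          · exact h.1 k ⟨hk.1, hk'⟩
          · exact h.2 k ⟨by omega, hk.2⟩
      have hCmeas : MeasurableSet[⨆ s : ℕ, MeasurableSpace.comap (X (j + n₀ + s)) inferInstance]
          (⋂ k ∈ Finset.Ico (j + n₀) (j + n₀ + m * n₀), S k) := by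
        refine Finset.measurableSet_biInter _ fun k hk => ?_
        rw [Finset.mem_Ico] at hk
        have hkk : k = j + n₀ + (k - (j + n₀)) := by omega
        rw [hkk]
        exact le_iSup (fun s => MeasurableSpace.comap (X (j + n₀ + s)) inferInstance)
          (k - (j + n₀)) _ (hScomap _)
      calc ζ r ^ (m + 1) = ζ r * ζ r ^ m := by ring
        _ ≤ ζ r * (μ (⋂ k ∈ Finset.Ico (j + n₀) (j + n₀ + m * n₀), S k)).toReal :=
            mul_le_mul_of_nonneg_left (ih (j + n₀)) hζpos.le
        _ ≤ (μ ((⋂ k ∈ Finset.Ico j (j + n₀), S k)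
              ∩ ⋂ k ∈ Finset.Ico (j + n₀) (j + n₀ + m * n₀), S k)).toReal :=
            key j _ hCmeas
        _ = _ := by rw [hsplit]
  -- conclude
  have hM : n_r < (n_r / n₀ + 1) * n₀ := by
    have h1 := Nat.div_add_mod n_r n₀
    have h2 := Nat.mod_lt n_r hn₀
    have h3 : (n_r / n₀ + 1) * n₀ = n₀ * (n_r / n₀) + n₀ := by ring
    omega
  have hsub : (⋂ k ∈ Finset.Ico j₀ (j₀ + (n_r / n₀ + 1) * n₀), S k) ⊆
      {ϖ | ∀ n : ℕ, a ^ n * ω (dist (X (j₀ + n) ϖ) (x (j₀ + n))) ≤ r} := by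
    intro ϖ hϖ
    simp only [Set.mem_iInter, Finset.mem_Ico, hSdef, Set.mem_setOf_eq] at hϖ ⊢
    intro n
    by_cases hn : n < (n_r / n₀ + 1) * n₀
    · have hω := hϖ (j₀ + n) ⟨by omega, by omega⟩
      calc a ^ n * ω (dist (X (j₀ + n) ϖ) (x (j₀ + n)))
          ≤ 1 * ω (dist (X (j₀ + n) ϖ) (x (j₀ + n))) :=
            mul_le_mul_of_nonneg_right (pow_le_one₀ ha.1.le ha.2.le) (hω01 _).1
        _ ≤ r := by simpa using hω
    · have hnr : n_r ≤ n := le_trans hM.le (not_lt.mp hn)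
      calc a ^ n * ω (dist (X (j₀ + n) ϖ) (x (j₀ + n)))
          ≤ a ^ n * 1 := mul_le_mul_of_nonneg_left (hω01 _).2 (pow_nonneg ha.1.le n)
        _ = a ^ n := mul_one _
        _ ≤ a ^ n_r := pow_le_pow_of_le_one ha.1.le ha.2.le hnr
        _ ≤ r := hanr.le
  calc ζ r ^ (n_r / n₀ + 1)
      ≤ (μ (⋂ k ∈ Finset.Ico j₀ (j₀ + (n_r / n₀ + 1) * n₀), S k)).toReal :=
        main (n_r / n₀ + 1) j₀
    _ ≤ (μ {ϖ | ∀ n : ℕ, a ^ n * ω (dist (X (j₀ + n) ϖ) (x (j₀ + n))) ≤ r}).toReal :=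
        ENNReal.toReal_mono (measure_ne_top μ _) (measure_mono hsub)
end
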